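/- arXiv:2001.10600 — 9 statements merged into one kernel-verified Lean document; each statement's English description precedes it below -/
import Mathlib

section
/- Let Z_1,...,Z_n be independent nonnegative real-valued random variables and let W_1,...,W_n be nonnegative random variables such that, setting X_i = Z_i + W_i, for each i the variable Z_i is independent of (X_1,...,X_{i-1}). Let τ = (1/2)·E[max_i Z_i], and let ALG be the stopping rule that accepts the first X_i with X_i ≥ τ (receiving value X_i, or 0 if no variable is accepted). Then E[ALG] ≥ (1/2)·E[max_i Z_i]. -/
/-!
Let `S i` be the event that the rule stops at `i` and `B i ⊇ S i` the event that it reaches `i`,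
i.e. all earlier `X j` are below `τ`. Since `Z i ≤ X i`, the reward is at least
`τ • 1_{S i} + (Z i - τ)⁺ • 1_{B i}` summed over `i`, and `B i` is determined by `X j` for `j < i`,
hence independent of `Z i`. With `a = P(the rule stops) ≤ 1` and `P(B i) ≥ 1 - a` this gives
`E[ALG] ≥ a τ + (1 - a) ∑ E[(Z i - τ)⁺]`, while `∑ E[(Z i - τ)⁺] ≥ E[max Z] - τ = τ`.
-/

open MeasureTheory ProbabilityTheory Finset

open scoped Classical in
noncomputable def algValue {Ω : Type*} {n : ℕ} (X : Fin (n + 1) → Ω → ℝ) (τ : ℝ) (ω : Ω) : ℝ :=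
  if h : (Finset.univ.filter (fun i => τ ≤ X i ω)).Nonempty then
    X ((Finset.univ.filter (fun i => τ ≤ X i ω)).min' h) ω
  else 0

section StoppingSets

variable {Ω ι : Type*} [LinearOrder ι]

def reachSet (X : ι → Ω → ℝ) (τ : ℝ) (i : ι) : Set Ω :=
  {ω | ∀ j < i, X j ω < τ}

def stopSet (X : ι → Ω → ℝ) (τ : ℝ) (i : ι) : Set Ω :=
  {ω | τ ≤ X i ω} ∩ reachSet X τ i

variable {X : ι → Ω → ℝ} {τ : ℝ} {ω : Ω} {i : ι}

lemma mem_stopSet_iff_isLeast : ω ∈ stopSet X τ i ↔ IsLeast {j | τ ≤ X j ω} i := by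
  simp only [stopSet, reachSet, IsLeast, lowerBounds, Set.mem_inter_iff, Set.mem_ofPred_eq]
  refine and_congr_right fun _ => forall_congr' fun j => ?_
  rw [← not_imp_not, not_lt, not_lt]

open Function in
lemma pairwise_disjoint_stopSet (X : ι → Ω → ℝ) (τ : ℝ) :
    Pairwise (Disjoint on stopSet X τ) := fun _ _ hij =>
  Set.disjoint_left.mpr fun _ hi hj =>
    hij ((mem_stopSet_iff_isLeast.mp hi).unique (mem_stopSet_iff_isLeast.mp hj))

lemma IsLeast.mem_stopSet_iff {m : ι} (hm : IsLeast {j | τ ≤ X j ω} m) :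
    ω ∈ stopSet X τ i ↔ i = m :=
  mem_stopSet_iff_isLeast.trans ⟨fun hi => hi.unique hm, fun hi => hi ▸ hm⟩

lemma compl_iUnion_stopSet_subset_reachSet [Fintype ι] (X : ι → Ω → ℝ) (τ : ℝ) (i : ι) :
    (⋃ j, stopSet X τ j)ᶜ ⊆ reachSet X τ i := by
  intro ω hω j _
  by_contra! hj
  have h : (univ.filter fun k => τ ≤ X k ω).Nonempty := ⟨j, by simpa using hj⟩
  have hmin := isLeast_min' _ h
  rw [coe_filter_univ] at hmin
  exact hω (Set.mem_iUnion.mpr ⟨_, hmin.mem_stopSet_iff.mpr rfl⟩)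

lemma stopSet_subset_reachSet : stopSet X τ i ⊆ reachSet X τ i :=
  Set.inter_subset_right

lemma threshold_add_excess_le_indicator_stopSet {Z : ι → Ω → ℝ} (hZX : Z i ω ≤ X i ω) :
    τ * (stopSet X τ i).indicator 1 ω + (reachSet X τ i).indicator (fun ω => (Z i ω - τ)⁺) ω
      ≤ (stopSet X τ i).indicator (X i) ω := by
  by_cases hreach : ω ∈ reachSet X τ i
  · by_cases hstop : τ ≤ X i ω
    · have hω : ω ∈ stopSet X τ i := ⟨hstop, hreach⟩
      simp only [Set.indicator_of_mem hω, Set.indicator_of_mem hreach, Pi.one_apply, mul_one]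
      have hexcess : (Z i ω - τ)⁺ ≤ X i ω - τ := max_le (by linarith) (by linarith)
      linarith
    · have hω : ω ∉ stopSet X τ i := fun h => hstop h.1
      simp only [Set.indicator_of_notMem hω, Set.indicator_of_mem hreach, mul_zero, zero_add]
      exact (posPart_eq_zero.mpr (by linarith)).le
  · have hω : ω ∉ stopSet X τ i := fun h => hreach (stopSet_subset_reachSet h)
    simp [Set.indicator_of_notMem hω, Set.indicator_of_notMem hreach]

variable [MeasurableSpace Ω] [Countable ι]

lemma measurableSet_reachSet (hX : ∀ i, Measurable (X i)) (τ : ℝ) (i : ι) :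
    MeasurableSet (reachSet X τ i) := by
  simp only [reachSet, Set.ofPred_forall]
  exact .iInter fun j => .iInter fun _ => measurableSet_lt (hX j) measurable_const

lemma measurableSet_stopSet (hX : ∀ i, Measurable (X i)) (τ : ℝ) (i : ι) :
    MeasurableSet (stopSet X τ i) :=
  (measurableSet_le measurable_const (hX i)).inter (measurableSet_reachSet hX τ i)

end StoppingSets

section Algorithm

variable {Ω : Type*} {n : ℕ}

lemma algValue_eq_sum_indicator (X : Fin (n + 1) → Ω → ℝ) (τ : ℝ) (ω : Ω) :
    algValue X τ ω = ∑ i, (stopSet X τ i).indicator (X i) ω := by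
  unfold algValue
  split_ifs with h
  · have hmin := isLeast_min' _ h
    rw [coe_filter_univ] at hmin
    classical
    simp only [Set.indicator_apply, hmin.mem_stopSet_iff, sum_ite_eq', mem_univ, if_true]
  · refine (sum_eq_zero fun i _ => Set.indicator_of_notMem (fun hi => h ?_) _).symm
    exact ⟨i, by simpa using hi.1⟩

variable [MeasurableSpace Ω] {μ : Measure Ω}

lemma integral_algValue_eq_sum {X : Fin (n + 1) → Ω → ℝ} (hXmeas : ∀ i, Measurable (X i))
    (hXint : ∀ i, Integrable (X i) μ) (τ : ℝ) :
    ∫ ω, algValue X τ ω ∂μ = ∑ i, ∫ ω in stopSet X τ i, X i ω ∂μ := by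
  simp_rw [algValue_eq_sum_indicator]
  rw [integral_finsetSum _ fun i _ => (hXint i).indicator (measurableSet_stopSet hXmeas τ i)]
  exact sum_congr rfl fun i _ => integral_indicator (measurableSet_stopSet hXmeas τ i)

end Algorithm

section Independence

variable {Ω β γ : Type*} [MeasurableSpace Ω] [MeasurableSpace β] [MeasurableSpace γ]
  {μ : Measure Ω}

lemma ProbabilityTheory.IndepFun.setIntegral_comp_preimage {f : Ω → β} {V : Ω → γ}
    (hfV : IndepFun f V μ) (hf : Measurable f) (hV : Measurable V) {g : β → ℝ}
    (hg : Measurable g) {S : Set γ} (hS : MeasurableSet S) :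
    ∫ ω in V ⁻¹' S, g (f ω) ∂μ = (∫ ω, g (f ω) ∂μ) * μ.real (V ⁻¹' S) := by
  have hind : IndepFun (g ∘ f) (S.indicator (1 : γ → ℝ) ∘ V) μ :=
    hfV.comp hg (measurable_one.indicator hS)
  have hprod : (V ⁻¹' S).indicator (g ∘ f) = (g ∘ f) * (S.indicator 1 ∘ V) := by
    ext ω
    by_cases hω : V ω ∈ S <;> simp [Set.indicator, hω]
  rw [← integral_indicator (hV hS), ← integral_indicator_one (hV hS)]
  simp only [← Function.comp_apply (f := g), hprod]
  rw [hind.integral_mul_eq_mul_integral (hg.comp hf).aestronglyMeasurable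
    ((measurable_one.indicator hS).comp hV).aestronglyMeasurable]
  rfl

end Independence

section Maximum

variable {Ω ι : Type*} [MeasurableSpace Ω] {μ : Measure Ω} {s : Finset ι}

lemma Finset.sup'_sub_le_sum_posPart (hs : s.Nonempty) (f : ι → ℝ) (t : ℝ) :
    s.sup' hs f - t ≤ ∑ i ∈ s, (f i - t)⁺ := by
  obtain ⟨i, hi, hmax⟩ := exists_mem_eq_sup' hs f
  rw [hmax]
  exact (le_posPart _).trans (single_le_sum (fun j _ => posPart_nonneg (f j - t)) hi)

lemma MeasureTheory.Integrable.finset_sup' (hs : s.Nonempty) {Z : ι → Ω → ℝ}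
    (hZ : ∀ i ∈ s, Integrable (Z i) μ) :
    Integrable (fun ω => s.sup' hs fun i => Z i ω) μ := by
  simp only [← Finset.sup'_apply]
  exact sup'_induction (p := fun g => Integrable g μ) hs Z (fun _ h₁ _ h₂ => h₁.sup h₂) hZ

lemma integral_sup'_sub_le_sum_integral_posPart [IsProbabilityMeasure μ] (hs : s.Nonempty)
    {Z : ι → Ω → ℝ} (hZ : ∀ i ∈ s, Integrable (Z i) μ) (t : ℝ) :
    ∫ ω, s.sup' hs (fun i => Z i ω) ∂μ - t ≤ ∑ i ∈ s, ∫ ω, (Z i ω - t)⁺ ∂μ := by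
  have hpos : ∀ i ∈ s, Integrable (fun ω => (Z i ω - t)⁺) μ :=
    fun i hi => ((hZ i hi).sub (integrable_const t)).pos_part
  calc ∫ ω, s.sup' hs (fun i => Z i ω) ∂μ - t
      = ∫ ω, (s.sup' hs (fun i => Z i ω) - t) ∂μ := by
        rw [integral_sub (Integrable.finset_sup' hs hZ) (integrable_const t), integral_const,
          probReal_univ, one_smul]
    _ ≤ ∫ ω, ∑ i ∈ s, (Z i ω - t)⁺ ∂μ :=
        integral_mono ((Integrable.finset_sup' hs hZ).sub (integrable_const t))
          (integrable_finsetSum _ hpos) fun ω => sup'_sub_le_sum_posPart hs _ t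
    _ = ∑ i ∈ s, ∫ ω, (Z i ω - t)⁺ ∂μ := integral_finsetSum _ hpos

end Maximum

section Augmentation

variable {Ω : Type*} [MeasurableSpace Ω] {μ : Measure Ω}

lemma setIntegral_reachSet_of_indepFun {ι : Type*} [LinearOrder ι] [Countable ι]
    {Z X : ι → Ω → ℝ} {i : ι} (hZ : Measurable (Z i)) (hX : ∀ j, Measurable (X j))
    (hindep : IndepFun (Z i) (fun ω (j : { j // j < i }) => X j ω) μ)
    {g : ℝ → ℝ} (hg : Measurable g) (τ : ℝ) :
    ∫ ω in reachSet X τ i, g (Z i ω) ∂μ = (∫ ω, g (Z i ω) ∂μ) * μ.real (reachSet X τ i) := by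
  have hpre : reachSet X τ i
      = (fun ω (j : { j // j < i }) => X j ω) ⁻¹' Set.univ.pi fun _ => Set.Iio τ := by
    ext ω
    simp [reachSet]
  rw [hpre]
  exact hindep.setIntegral_comp_preimage hZ (measurable_pi_lambda _ fun j => hX j) hg
    (.univ_pi fun _ => measurableSet_Iio)

lemma threshold_add_excess_le_setIntegral_stopSet [IsFiniteMeasure μ] {ι : Type*} [LinearOrder ι]
    [Countable ι] {Z X : ι → Ω → ℝ} {i : ι}
    (hZmeas : Measurable (Z i)) (hXmeas : ∀ j, Measurable (X j))
    (hZint : Integrable (Z i) μ) (hXint : Integrable (X i) μ) (hZX : ∀ ω, Z i ω ≤ X i ω)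
    (hindep : IndepFun (Z i) (fun ω (j : { j // j < i }) => X j ω) μ) (τ : ℝ) :
    τ * μ.real (stopSet X τ i) + (∫ ω, (Z i ω - τ)⁺ ∂μ) * μ.real (reachSet X τ i)
      ≤ ∫ ω in stopSet X τ i, X i ω ∂μ := by
  have hstop := measurableSet_stopSet hXmeas τ i
  have hreach := measurableSet_reachSet hXmeas τ i
  have hthreshold : Integrable (fun ω => τ * (stopSet X τ i).indicator 1 ω) μ :=
    ((integrable_const 1).indicator hstop).const_mul τ
  have hexcess : Integrable ((reachSet X τ i).indicator fun ω => (Z i ω - τ)⁺) μ :=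
    (hZint.sub (integrable_const τ)).pos_part.indicator hreach
  calc τ * μ.real (stopSet X τ i) + (∫ ω, (Z i ω - τ)⁺ ∂μ) * μ.real (reachSet X τ i)
      = ∫ ω, (τ * (stopSet X τ i).indicator 1 ω
          + (reachSet X τ i).indicator (fun ω => (Z i ω - τ)⁺) ω) ∂μ := by
        rw [integral_add hthreshold hexcess, integral_const_mul, integral_indicator_one hstop,
          integral_indicator hreach]
        exact congrArg _ (setIntegral_reachSet_of_indepFun hZmeas hXmeas hindep
          (g := fun x => (x - τ)⁺) (measurable_id.sub measurable_const).posPart τ).symm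
    _ ≤ ∫ ω, (stopSet X τ i).indicator (X i) ω ∂μ :=
        integral_mono (hthreshold.add hexcess) (hXint.indicator hstop)
          fun ω => threshold_add_excess_le_indicator_stopSet (hZX ω)
    _ = ∫ ω in stopSet X τ i, X i ω ∂μ := integral_indicator hstop

theorem integral_algValue_ge [IsProbabilityMeasure μ] {n : ℕ} {Z X : Fin (n + 1) → Ω → ℝ}
    (hZmeas : ∀ i, Measurable (Z i)) (hXmeas : ∀ i, Measurable (X i))
    (hZint : ∀ i, Integrable (Z i) μ) (hXint : ∀ i, Integrable (X i) μ)
    (hZX : ∀ i ω, Z i ω ≤ X i ω)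
    (hindep : ∀ i : Fin (n + 1),
      IndepFun (Z i) (fun ω => fun j : { j : Fin (n + 1) // j < i } => X j ω) μ) (τ : ℝ) :
    μ.real (⋃ i, stopSet X τ i) * τ
        + (1 - μ.real (⋃ i, stopSet X τ i)) * ∑ i, ∫ ω, (Z i ω - τ)⁺ ∂μ
      ≤ ∫ ω, algValue X τ ω ∂μ := by
  set a := μ.real (⋃ i, stopSet X τ i)
  have hstop := measurableSet_stopSet hXmeas τ
  have ha : a = ∑ i, μ.real (stopSet X τ i) :=
    measureReal_iUnion_fintype (pairwise_disjoint_stopSet X τ) hstop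
  have hreach_ge : ∀ i, 1 - a ≤ μ.real (reachSet X τ i) := fun i => by
    rw [← probReal_univ (μ := μ), ← measureReal_compl (.iUnion hstop)]
    exact measureReal_mono (compl_iUnion_stopSet_subset_reachSet X τ i)
  calc a * τ + (1 - a) * ∑ i, ∫ ω, (Z i ω - τ)⁺ ∂μ
      = ∑ i, (τ * μ.real (stopSet X τ i) + (∫ ω, (Z i ω - τ)⁺ ∂μ) * (1 - a)) := by
        rw [sum_add_distrib, ← mul_sum, ← sum_mul, ← ha]
        ring
    _ ≤ ∑ i, (τ * μ.real (stopSet X τ i)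
          + (∫ ω, (Z i ω - τ)⁺ ∂μ) * μ.real (reachSet X τ i)) := by
        gcongr with i
        exact hreach_ge i
    _ ≤ ∑ i, ∫ ω in stopSet X τ i, X i ω ∂μ := sum_le_sum fun i _ =>
        threshold_add_excess_le_setIntegral_stopSet (hZmeas i) hXmeas (hZint i) (hXint i)
          (hZX i) (hindep i) τ
    _ = ∫ ω, algValue X τ ω ∂μ := (integral_algValue_eq_sum hXmeas hXint τ).symm

end Augmentation

theorem stmt0_general {Ω : Type*} [MeasurableSpace Ω] (μ : Measure Ω) [IsProbabilityMeasure μ]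
    {n : ℕ} (Z W X : Fin (n + 1) → Ω → ℝ)
    (hZmeas : ∀ i, Measurable (Z i)) (hWmeas : ∀ i, Measurable (W i))
    (hWnn : ∀ i ω, 0 ≤ W i ω)
    (hZint : ∀ i, Integrable (Z i) μ) (hWint : ∀ i, Integrable (W i) μ)
    (hX : ∀ i ω, X i ω = Z i ω + W i ω)
    (hindep : ∀ i : Fin (n + 1),
      IndepFun (Z i) (fun ω => fun j : { j : Fin (n + 1) // j < i } => X j ω) μ)
    (τ : ℝ)
    (hτ : τ = (1 / 2) * ∫ ω, Finset.univ.sup' Finset.univ_nonempty (fun i => Z i ω) ∂μ) :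
    (1 / 2) * ∫ ω, Finset.univ.sup' Finset.univ_nonempty (fun i => Z i ω) ∂μ
      ≤ ∫ ω, algValue X τ ω ∂μ := by
  have hXfun : ∀ i, X i = Z i + W i := fun i => funext (hX i)
  have hXmeas : ∀ i, Measurable (X i) := fun i => hXfun i ▸ (hZmeas i).add (hWmeas i)
  have hXint : ∀ i, Integrable (X i) μ := fun i => hXfun i ▸ (hZint i).add (hWint i)
  have hZX : ∀ i ω, Z i ω ≤ X i ω := fun i ω => by linarith [hX i ω, hWnn i ω]
  have hexcess := integral_sup'_sub_le_sum_integral_posPart univ_nonempty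
    (fun i _ => hZint i) τ
  have hgain := integral_algValue_ge hZmeas hXmeas hZint hXint hZX hindep τ
  set a := μ.real (⋃ i, stopSet X τ i)
  have ha : a ≤ 1 := measureReal_le_one
  rw [← hτ]
  calc τ = a * τ + (1 - a) * τ := by ring
    _ ≤ a * τ + (1 - a) * ∑ i, ∫ ω, (Z i ω - τ)⁺ ∂μ := by gcongr; linarith
    _ ≤ ∫ ω, algValue X τ ω ∂μ := hgain

/-- Single-item augmentation lemma: with `τ = (1/2)·E[max_i Z_i]`, the rule accepting the
first `X i ≥ τ` gets at least half of `E[max_i Z_i]`. -/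
theorem stmt0 {Ω : Type*} [MeasurableSpace Ω] (μ : Measure Ω) [IsProbabilityMeasure μ]
    {n : ℕ} (Z W X : Fin (n + 1) → Ω → ℝ)
    (hZmeas : ∀ i, Measurable (Z i)) (hWmeas : ∀ i, Measurable (W i))
    (hZnn : ∀ i ω, 0 ≤ Z i ω) (hWnn : ∀ i ω, 0 ≤ W i ω)
    (hZint : ∀ i, Integrable (Z i) μ) (hWint : ∀ i, Integrable (W i) μ)
    (hX : ∀ i ω, X i ω = Z i ω + W i ω)
    (hindep : ∀ i : Fin (n + 1),
      IndepFun (Z i) (fun ω => fun j : { j : Fin (n + 1) // j < i } => X j ω) μ)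
    (τ : ℝ)
    (hτ : τ = (1 / 2) * ∫ ω, Finset.univ.sup' Finset.univ_nonempty (fun i => Z i ω) ∂μ) :
    (1 / 2) * ∫ ω, Finset.univ.sup' Finset.univ_nonempty (fun i => Z i ω) ∂μ
      ≤ ∫ ω, algValue X τ ω ∂μ :=
  stmt0_general μ Z W X hZmeas hWmeas hWnn hZint hWint hX hindep τ hτ
end

section
/- Fix ε ∈ (0, 1/(2n)]. Let Y_1,...,Y_n be independent random variables with Y_j = 1/ε^j with probability ε^j and Y_j = 0 otherwise. Then E[max_j Y_j] ≥ n/2. -/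
/-!
Let `N` variables take values `y_j ∈ {0, 1/p_j}`. If the maximum `y_{j₀}` is nonzero then
`p_{j₀} y_{j₀} = 1`, so every other `y_j` equals `p_{j₀} y_j y_{j₀}`; hence, pointwise,
`∑ y_j ≤ max y + ∑_{j ≠ k} p_k y_j y_k`. Taking expectations, each `E[y_j] = 1` and, by pairwise
independence, each `E[y_j y_k] = 1`, so `E[max y] ≥ N - ∑_{j ≠ k} p_k ≥ N (1 - ∑ p)`.
For the tower variables `p_j = ε^{j+1}` and `∑ p ≤ (n + 1) ε ≤ 1/2`.
-/

open MeasureTheory ProbabilityTheory Finset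

lemma le_mul_mul_of_eq_one_div_or_eq_zero {a b p q : ℝ} (hp : 0 < p) (hq : 0 < q)
    (ha : a = 1 / p ∨ a = 0) (hb : b = 1 / q ∨ b = 0) (hab : a ≤ b) :
    a ≤ q * (a * b) := by
  rcases ha with rfl | rfl
  · rcases hb with rfl | rfl
    · exact le_of_eq (by field_simp)
    · exact absurd hab (by simpa using hp)
  · simp

lemma sum_le_sup'_add_sum_sum_erase {ι : Type*} [Fintype ι] [Nonempty ι] [DecidableEq ι]
    {p : ι → ℝ} (hp : ∀ j, 0 < p j) {y : ι → ℝ} (hy : ∀ j, y j = 1 / p j ∨ y j = 0) :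
    ∑ j, y j ≤ univ.sup' univ_nonempty y + ∑ j, ∑ k ∈ univ.erase j, p k * (y j * y k) := by
  have hy0 : ∀ j, 0 ≤ y j := fun j => by
    rcases hy j with h | h <;> simp [h, (hp j).le]
  have hterm : ∀ j k, 0 ≤ p k * (y j * y k) := fun j k =>
    mul_nonneg (hp k).le (mul_nonneg (hy0 j) (hy0 k))
  obtain ⟨j₀, -, hj₀⟩ := exists_mem_eq_sup' univ_nonempty y
  rw [← add_sum_erase _ _ (mem_univ j₀), ← hj₀]
  gcongr
  calc ∑ j ∈ univ.erase j₀, y j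
      ≤ ∑ j ∈ univ.erase j₀, p j₀ * (y j * y j₀) := sum_le_sum fun j _ =>
        le_mul_mul_of_eq_one_div_or_eq_zero (hp j) (hp j₀) (hy j) (hy j₀)
          (hj₀ ▸ le_sup' y (mem_univ j))
    _ ≤ ∑ j ∈ univ.erase j₀, ∑ k ∈ univ.erase j, p k * (y j * y k) := sum_le_sum fun j hj =>
        single_le_sum (f := fun k => p k * (y j * y k)) (fun k _ => hterm j k)
          (mem_erase.2 ⟨(ne_of_mem_erase hj).symm, mem_univ j₀⟩)
    _ ≤ ∑ j, ∑ k ∈ univ.erase j, p k * (y j * y k) :=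
        sum_le_sum_of_subset_of_nonneg (subset_univ _) fun j _ _ => sum_nonneg fun k _ => hterm j k

section TwoValued

variable {Ω : Type*} {X : Ω → ℝ}

lemma eq_indicator_of_forall_eq_or_eq_zero {c : ℝ} (hX : ∀ ω, X ω = c ∨ X ω = 0) :
    X = {ω | X ω = c}.indicator fun _ => c := by
  funext ω
  rw [Set.indicator_apply]
  split_ifs with h
  · exact h
  · exact (hX ω).resolve_left h

variable [MeasurableSpace Ω] {μ : Measure Ω}

lemma integrable_of_forall_eq_or_eq_zero [IsFiniteMeasure μ] {c : ℝ} (hmeas : Measurable X)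
    (hX : ∀ ω, X ω = c ∨ X ω = 0) : Integrable X μ := by
  rw [eq_indicator_of_forall_eq_or_eq_zero hX]
  exact (integrable_const c).indicator (hmeas (measurableSet_singleton c))

lemma integral_eq_one_of_forall_eq_one_div_or_eq_zero {p : ℝ} (hp : p ≠ 0) (hmeas : Measurable X)
    (hX : ∀ ω, X ω = 1 / p ∨ X ω = 0) (hprob : μ.real {ω | X ω = 1 / p} = p) :
    ∫ ω, X ω ∂μ = 1 := by
  have hA : MeasurableSet {ω | X ω = 1 / p} := hmeas (measurableSet_singleton _)
  rw [eq_indicator_of_forall_eq_or_eq_zero hX, integral_indicator_const _ hA, hprob, smul_eq_mul]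
  field_simp

end TwoValued

section PairwiseProducts

variable {Ω ι : Type*} [MeasurableSpace Ω] {μ : Measure Ω} [Fintype ι] [DecidableEq ι]
  {Y : ι → Ω → ℝ}

lemma integrable_sum_sum_erase_mul (hint : ∀ j, Integrable (Y j) μ)
    (hindep : Pairwise fun j k => IndepFun (Y j) (Y k) μ) (q : ι → ℝ) :
    Integrable (fun ω => ∑ j, ∑ k ∈ univ.erase j, q k * (Y j ω * Y k ω)) μ :=
  integrable_finsetSum _ fun j _ => integrable_finsetSum _ fun k hk =>
    ((hindep (ne_of_mem_erase hk).symm).integrable_mul (hint j) (hint k)).const_mul _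

lemma integral_sum_sum_erase_mul (hmeas : ∀ j, Measurable (Y j)) (hint : ∀ j, Integrable (Y j) μ)
    (hindep : Pairwise fun j k => IndepFun (Y j) (Y k) μ) (q : ι → ℝ) :
    ∫ ω, ∑ j, ∑ k ∈ univ.erase j, q k * (Y j ω * Y k ω) ∂μ
      = ∑ j, ∑ k ∈ univ.erase j, q k * ((∫ ω, Y j ω ∂μ) * ∫ ω, Y k ω ∂μ) := by
  have hmul : ∀ j, ∀ k ∈ univ.erase j, Integrable (fun ω => q k * (Y j ω * Y k ω)) μ :=
    fun j k hk => ((hindep (ne_of_mem_erase hk).symm).integrable_mul (hint j) (hint k)).const_mul _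
  rw [integral_finsetSum _ fun j _ => integrable_finsetSum _ (hmul j)]
  refine sum_congr rfl fun j _ => ?_
  rw [integral_finsetSum _ (hmul j)]
  refine sum_congr rfl fun k hk => ?_
  rw [integral_const_mul]
  exact congrArg _ ((hindep (ne_of_mem_erase hk).symm).integral_mul_eq_mul_integral
    (hmeas j).aestronglyMeasurable (hmeas k).aestronglyMeasurable)

end PairwiseProducts

theorem card_mul_one_sub_sum_le_integral_sup' {Ω : Type*} [MeasurableSpace Ω] (μ : Measure Ω)
    [IsProbabilityMeasure μ] {ι : Type*} [Fintype ι] [Nonempty ι] {p : ι → ℝ} (hp : ∀ j, 0 < p j)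
    {Y : ι → Ω → ℝ} (hmeas : ∀ j, Measurable (Y j))
    (hindep : Pairwise fun j k => IndepFun (Y j) (Y k) μ)
    (hval : ∀ j ω, Y j ω = 1 / p j ∨ Y j ω = 0) (hprob : ∀ j, μ.real {ω | Y j ω = 1 / p j} = p j) :
    Fintype.card ι * (1 - ∑ j, p j) ≤ ∫ ω, univ.sup' univ_nonempty (fun j => Y j ω) ∂μ := by
  classical
  have hint : ∀ j, Integrable (Y j) μ := fun j =>
    integrable_of_forall_eq_or_eq_zero (hmeas j) (hval j)
  have hmean : ∀ j, ∫ ω, Y j ω ∂μ = 1 := fun j =>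
    integral_eq_one_of_forall_eq_one_div_or_eq_zero (hp j).ne' (hmeas j) (hval j) (hprob j)
  set S : Ω → ℝ := fun ω => ∑ j, Y j ω
  set T : Ω → ℝ := fun ω => ∑ j, ∑ k ∈ univ.erase j, p k * (Y j ω * Y k ω)
  set M : Ω → ℝ := fun ω => univ.sup' univ_nonempty (fun j => Y j ω)
  have hS_int : Integrable S μ := integrable_finsetSum _ fun j _ => hint j
  have hT_int : Integrable T μ := integrable_sum_sum_erase_mul hint hindep p
  have hM_int : Integrable M μ := by
    convert sup'_induction univ_nonempty Y (p := (Integrable · μ))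
      (fun _ hf _ hg => hf.sup hg) fun j _ => hint j using 1
    ext ω
    simp [M]
  have hS : ∫ ω, S ω ∂μ = Fintype.card ι := by
    simp [S, integral_finsetSum _ fun j _ => hint j, hmean]
  have hT : ∫ ω, T ω ∂μ ≤ Fintype.card ι * ∑ j, p j := calc
    ∫ ω, T ω ∂μ = ∑ j, ∑ k ∈ univ.erase j, p k := by
        simp only [T, integral_sum_sum_erase_mul hmeas hint hindep, hmean, mul_one]
    _ ≤ ∑ _j : ι, ∑ k, p k := sum_le_sum fun j _ =>
        sum_le_sum_of_subset_of_nonneg (subset_univ _) fun k _ _ => (hp k).le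
    _ = Fintype.card ι * ∑ j, p j := by rw [sum_const, card_univ, nsmul_eq_mul]
  have hSTM : ∀ ω, S ω - T ω ≤ M ω := fun ω => by
    have := sum_le_sup'_add_sum_sum_erase hp (fun j => hval j ω)
    simp only [S, T, M]
    linarith
  calc (Fintype.card ι : ℝ) * (1 - ∑ j, p j) ≤ ∫ ω, S ω ∂μ - ∫ ω, T ω ∂μ := by
        rw [hS]; linarith
    _ = ∫ ω, S ω - T ω ∂μ := (integral_sub hS_int hT_int).symm
    _ ≤ ∫ ω, M ω ∂μ := integral_mono (hS_int.sub hT_int) hM_int hSTM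

/-- Tower variables: `Y j = ε^{-(j+1)}` with probability `ε^{j+1}` (else 0), independent,
for `j = 0, …, n` (i.e. `n + 1` variables).  If `ε ≤ 1/(2(n+1))` then
`E[max_j Y_j] ≥ (n+1)/2`. -/
theorem stmt4 {Ω : Type*} [MeasurableSpace Ω] (μ : Measure Ω) [IsProbabilityMeasure μ]
    {n : ℕ} (ε : ℝ) (hε0 : 0 < ε) (hε : ε ≤ 1 / (2 * (n + 1)))
    (Y : Fin (n + 1) → Ω → ℝ) (hmeas : ∀ j, Measurable (Y j))
    (hindep : iIndepFun Y μ)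
    (hval : ∀ j ω, Y j ω = (1 / ε) ^ ((j : ℕ) + 1) ∨ Y j ω = 0)
    (hprob : ∀ j, (μ {ω | Y j ω = (1 / ε) ^ ((j : ℕ) + 1)}).toReal = ε ^ ((j : ℕ) + 1)) :
    ((n : ℝ) + 1) / 2 ≤ ∫ ω, Finset.univ.sup' Finset.univ_nonempty (fun j => Y j ω) ∂μ := by
  simp only [one_div_pow] at hval hprob
  have key := card_mul_one_sub_sum_le_integral_sup' μ (fun j => by positivity) hmeas
    (fun j k hjk => hindep.indepFun hjk) hval hprob
  have hε1 : ε ≤ 1 :=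
    hε.trans (by rw [div_le_one (by positivity)]; linarith [n.cast_nonneg (α := ℝ)])
  have hsum : ∑ j : Fin (n + 1), ε ^ ((j : ℕ) + 1) ≤ ((n : ℝ) + 1) * ε := calc
    _ ≤ ∑ _j : Fin (n + 1), ε :=
        sum_le_sum fun j _ => pow_le_of_le_one hε0.le hε1 (j : ℕ).succ_ne_zero
    _ = ((n : ℝ) + 1) * ε := by simp
  have hnε : ((n : ℝ) + 1) * ε ≤ 1 / 2 := by
    rw [le_div_iff₀ (by positivity)] at hε
    linarith
  rw [Fintype.card_fin, Nat.cast_add_one] at key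
  nlinarith [n.cast_nonneg (α := ℝ)]
end

section
/- Fix ε ∈ (0, 1/n]. Consider the 2-sparse tower instance: independent Y_1,...,Y_n with Y_j = 1/ε^j with probability ε^j and 0 otherwise, and X_i = Y_i + ε·Y_{i+1} for i < n, X_n = Y_n. For every fixed threshold τ ≥ 0, the algorithm that accepts the first X_i with X_i ≥ τ has expected reward at most 3. -/
open MeasureTheory ProbabilityTheory Finset

/-!
Write `a_j = ε^{-(j+1)}` for the nonzero value of `Y_j`, and let `i*` be the first index with
`τ ≤ a_{i*}`. If the rule stops at `i` while `Y_{i+1} = 0` (or `i = n`), then `X_i = Y_i ≤ a_i`,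
so `i ≥ i*`; and `i > i*` is impossible: `X_{i-1} < τ ≤ a_{i-1} = ε a_i` forces `Y_i = 0`, and then
`τ ≤ X_i = 0 ≤ X_{i-1} < τ`. Hence the reward is at most `X_{i*}` plus, for each `i < n`, `X_i` on
the event `Y_{i+1} ≠ 0`. Now `E X_{i*} ≤ 1 + ε`, while `X_i ≤ 2 a_i` and `P(Y_{i+1} ≠ 0) = ε / a_i`,
so the expected reward is at most `1 + ε + 2nε ≤ 3` when `(n + 1) ε ≤ 1`.
-/

def IsFirstReach {ι : Type*} [LinearOrder ι] (v : ι → ℝ) (τ : ℝ) (i : ι) : Prop :=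
  τ ≤ v i ∧ ∀ j < i, v j < τ

theorem IsFirstReach.eq {ι : Type*} [LinearOrder ι] {v : ι → ℝ} {τ : ℝ} {i j : ι}
    (hi : IsFirstReach v τ i) (hj : IsFirstReach v τ j) : i = j := by
  by_contra hne
  rcases lt_or_gt_of_ne hne with h | h
  · exact (hj.2 i h).not_ge hi.1
  · exact (hi.2 j h).not_ge hj.1

section algValue

variable {Ω : Type*} {n : ℕ} {X : Fin (n + 1) → Ω → ℝ} {τ : ℝ} {ω : Ω}

theorem algValue_nonneg (hX : ∀ i, 0 ≤ X i ω) : 0 ≤ algValue X τ ω := by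
  unfold algValue
  split_ifs
  exacts [hX _, le_rfl]

theorem algValue_le {b : ℝ} (hb : 0 ≤ b) (h : ∀ i, IsFirstReach (X · ω) τ i → X i ω ≤ b) :
    algValue X τ ω ≤ b := by
  unfold algValue
  split_ifs with hne
  · set F := univ.filter (fun i => τ ≤ X i ω)
    refine h (F.min' hne) ⟨(mem_filter.mp (F.min'_mem hne)).2, fun j hj => ?_⟩
    by_contra hc
    exact (F.min'_le j (mem_filter.mpr ⟨mem_univ _, not_lt.mp hc⟩)).not_gt hj
  · exact hb

end algValue

def towerHigh {Ω : Type*} {n : ℕ} (ε : ℝ) (Y : Fin (n + 1) → Ω → ℝ) (j : Fin (n + 1)) :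
    Set Ω :=
  {ω | Y j ω = (1 / ε) ^ ((j : ℕ) + 1)}

def IsTowerValued {Ω : Type*} {n : ℕ} (ε : ℝ) (Y : Fin (n + 1) → Ω → ℝ) : Prop :=
  ∀ j ω, Y j ω = (1 / ε) ^ ((j : ℕ) + 1) ∨ Y j ω = 0

noncomputable def towerX {Ω : Type*} {n : ℕ} (ε : ℝ) (Y : Fin (n + 1) → Ω → ℝ)
    (i : Fin (n + 1)) (ω : Ω) : ℝ :=
  Y i ω + if h : (i : ℕ) + 1 < n + 1 then ε * Y ⟨(i : ℕ) + 1, h⟩ ω else 0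

section tower

variable {Ω : Type*} {n : ℕ} {ε : ℝ} {Y : Fin (n + 1) → Ω → ℝ}

theorem towerX_castSucc (k : Fin n) (ω : Ω) :
    towerX ε Y k.castSucc ω = Y k.castSucc ω + ε * Y k.succ ω := by
  simp [towerX, Fin.succ]

theorem towerX_last (ω : Ω) : towerX ε Y (Fin.last n) ω = Y (Fin.last n) ω := by
  simp [towerX]

theorem IsTowerValued.nonneg (hY : IsTowerValued ε Y) (hε : 0 < ε) (j : Fin (n + 1)) (ω : Ω) :
    0 ≤ Y j ω := by
  rcases hY j ω with h | h <;> rw [h]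
  positivity

theorem IsTowerValued.le_pow (hY : IsTowerValued ε Y) (hε : 0 < ε)
    (j : Fin (n + 1)) (ω : Ω) : Y j ω ≤ (1 / ε) ^ ((j : ℕ) + 1) := by
  rcases hY j ω with h | h <;> rw [h]
  positivity

theorem towerX_nonneg (hε : 0 < ε) (hY : IsTowerValued ε Y) (i : Fin (n + 1)) (ω : Ω) :
    0 ≤ towerX ε Y i ω := by
  have := hY.nonneg hε
  unfold towerX
  split_ifs
  · exact add_nonneg (this i ω) (mul_nonneg hε.le (this _ ω))
  · simpa using this i ω

theorem towerX_eq_or_mem (hY : IsTowerValued ε Y) (i : Fin (n + 1)) (ω : Ω) :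
    towerX ε Y i ω = Y i ω ∨
      ∃ k : Fin n, i = k.castSucc ∧ ω ∈ towerHigh ε Y k.succ := by
  induction i using Fin.lastCases with
  | last => exact .inl (towerX_last ω)
  | cast k =>
    rcases hY k.succ ω with h | h
    · exact .inr ⟨k, rfl, h⟩
    · left
      rw [towerX_castSucc, h, mul_zero, add_zero]

theorem mul_one_div_pow_succ (hε : ε ≠ 0) (m : ℕ) : ε * (1 / ε) ^ (m + 1) = (1 / ε) ^ m := by
  rw [pow_succ', ← mul_assoc, mul_one_div_cancel hε, one_mul]

theorem isFirstReach_of_towerX_eq (hε : 0 < ε) (hε1 : ε ≤ 1) (hY : IsTowerValued ε Y)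
    {τ : ℝ} {ω : Ω} {i : Fin (n + 1)} (hstop : IsFirstReach (towerX ε Y · ω) τ i)
    (hXi : towerX ε Y i ω = Y i ω) :
    IsFirstReach (fun j : Fin (n + 1) => (1 / ε) ^ ((j : ℕ) + 1)) τ i := by
  have hτi : τ ≤ Y i ω := hXi ▸ hstop.1
  refine ⟨hτi.trans (hY.le_pow hε i ω), fun j hj => ?_⟩
  by_contra! hτj
  obtain ⟨k, rfl⟩ := Fin.exists_succ_eq.mpr (Fin.ne_zero_of_lt hj)
  have hprev : towerX ε Y k.castSucc ω < τ := hstop.2 k.castSucc k.castSucc_lt_succ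
  rw [towerX_castSucc] at hprev
  have hYk := hY.nonneg hε k.castSucc ω
  rcases hY k.succ ω with h | h
  · have hjk : (1 / ε) ^ ((j : ℕ) + 1) ≤ ε * Y k.succ ω := by
      rw [h, Fin.val_succ, mul_one_div_pow_succ hε.ne']
      exact pow_le_pow_right₀ (one_le_one_div hε hε1)
        (Nat.succ_le_succ (Fin.le_castSucc_iff.mpr hj))
    linarith
  · rw [h, mul_zero] at hprev
    linarith

open scoped Classical in
theorem algValue_towerX_le (hε : 0 < ε) (hε1 : ε ≤ 1) (hY : IsTowerValued ε Y) (τ : ℝ) (ω : Ω) :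
    algValue (towerX ε Y) τ ω ≤
      ∑ i ∈ univ.filter (IsFirstReach (fun j : Fin (n + 1) => (1 / ε) ^ ((j : ℕ) + 1)) τ),
          towerX ε Y i ω +
        ∑ k : Fin n, (towerHigh ε Y k.succ).indicator (towerX ε Y k.castSucc) ω := by
  have hX := towerX_nonneg hε hY
  have hind : ∀ k : Fin n, 0 ≤ (towerHigh ε Y k.succ).indicator
      (towerX ε Y k.castSucc) ω := fun k => Set.indicator_nonneg (fun ω _ => hX _ ω) ω
  refine algValue_le (add_nonneg (sum_nonneg fun i _ => hX i ω) (sum_nonneg fun k _ => hind k))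
    fun i hstop => ?_
  rcases towerX_eq_or_mem hY i ω with hXi | ⟨k, rfl, hk⟩
  · have hi := mem_filter.mpr ⟨mem_univ i, isFirstReach_of_towerX_eq hε hε1 hY hstop hXi⟩
    exact le_add_of_le_of_nonneg (single_le_sum (fun j _ => hX j ω) hi)
      (sum_nonneg fun k _ => hind k)
  · refine le_add_of_nonneg_of_le (sum_nonneg fun i _ => hX i ω) ?_
    have := single_le_sum (fun k _ => hind k) (mem_univ k)
    rwa [Set.indicator_of_mem hk] at this

theorem IsTowerValued.eq_indicator (hY : IsTowerValued ε Y) (j : Fin (n + 1)) :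
    Y j = (towerHigh ε Y j).indicator (fun _ => (1 / ε) ^ ((j : ℕ) + 1)) := by
  funext ω
  by_cases h : ω ∈ towerHigh ε Y j
  · rwa [Set.indicator_of_mem h]
  · rw [Set.indicator_of_notMem h]
    exact (hY j ω).resolve_left h

variable [MeasurableSpace Ω] {μ : Measure Ω}

theorem measurableSet_towerHigh (hmeas : ∀ j, Measurable (Y j)) (j : Fin (n + 1)) :
    MeasurableSet (towerHigh ε Y j) :=
  hmeas j (measurableSet_singleton _)

theorem IsTowerValued.integrable [IsFiniteMeasure μ] (hY : IsTowerValued ε Y)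
    (hmeas : ∀ j, Measurable (Y j)) (j : Fin (n + 1)) : Integrable (Y j) μ := by
  rw [hY.eq_indicator j]
  exact (integrable_const _).indicator (measurableSet_towerHigh hmeas j)

theorem IsTowerValued.integral_eq_one (hY : IsTowerValued ε Y) (hε : 0 < ε)
    (hmeas : ∀ j, Measurable (Y j)) (hprob : ∀ j, (μ (towerHigh ε Y j)).toReal = ε ^ ((j : ℕ) + 1))
    (j : Fin (n + 1)) : ∫ ω, Y j ω ∂μ = 1 := by
  rw [hY.eq_indicator j, integral_indicator_const _ (measurableSet_towerHigh hmeas j),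
    smul_eq_mul, measureReal_def, hprob j, ← mul_pow, mul_one_div_cancel hε.ne', one_pow]

theorem integrable_towerX [IsFiniteMeasure μ] (hmeas : ∀ j, Measurable (Y j))
    (hY : IsTowerValued ε Y) (i : Fin (n + 1)) :
    Integrable (towerX ε Y i) μ := by
  induction i using Fin.lastCases with
  | last => simpa only [funext (towerX_last (ε := ε) (Y := Y))] using hY.integrable hmeas _
  | cast k =>
    rw [funext (towerX_castSucc k)]
    exact (hY.integrable hmeas _).add ((hY.integrable hmeas _).const_mul ε)

theorem integral_towerX_le [IsFiniteMeasure μ] (hε : 0 < ε) (hmeas : ∀ j, Measurable (Y j))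
    (hY : IsTowerValued ε Y) (hprob : ∀ j, (μ (towerHigh ε Y j)).toReal = ε ^ ((j : ℕ) + 1))
    (i : Fin (n + 1)) : ∫ ω, towerX ε Y i ω ∂μ ≤ 1 + ε := by
  induction i using Fin.lastCases with
  | last =>
    simp only [towerX_last, hY.integral_eq_one hε hmeas hprob]
    linarith
  | cast k =>
    simp only [towerX_castSucc]
    rw [integral_add (hY.integrable hmeas _) ((hY.integrable hmeas _).const_mul ε),
      integral_const_mul, hY.integral_eq_one hε hmeas hprob, hY.integral_eq_one hε hmeas hprob,
      mul_one]

theorem integral_indicator_towerX_le [IsFiniteMeasure μ] (hε : 0 < ε)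
    (hmeas : ∀ j, Measurable (Y j)) (hY : IsTowerValued ε Y)
    (hprob : ∀ j, (μ (towerHigh ε Y j)).toReal = ε ^ ((j : ℕ) + 1)) (k : Fin n) :
    ∫ ω, (towerHigh ε Y k.succ).indicator (towerX ε Y k.castSucc) ω ∂μ ≤ 2 * ε := by
  have hS := measurableSet_towerHigh (ε := ε) hmeas k.succ
  have hle : ∀ ω, (towerHigh ε Y k.succ).indicator (towerX ε Y k.castSucc) ω ≤
      (towerHigh ε Y k.succ).indicator (fun _ => 2 * (1 / ε) ^ ((k : ℕ) + 1)) ω := by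
    intro ω
    apply Set.indicator_le_indicator
    have hlow : Y k.castSucc ω ≤ (1 / ε) ^ ((k : ℕ) + 1) := hY.le_pow hε k.castSucc ω
    have hhigh : ε * Y k.succ ω ≤ (1 / ε) ^ ((k : ℕ) + 1) := by
      rw [← mul_one_div_pow_succ hε.ne']
      exact mul_le_mul_of_nonneg_left (hY.le_pow hε k.succ ω) hε.le
    rw [towerX_castSucc]
    linarith
  calc ∫ ω, (towerHigh ε Y k.succ).indicator (towerX ε Y k.castSucc) ω ∂μ
      ≤ ∫ ω, (towerHigh ε Y k.succ).indicator (fun _ => 2 * (1 / ε) ^ ((k : ℕ) + 1)) ω ∂μ :=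
        integral_mono_of_nonneg
          (ae_of_all _ fun ω => Set.indicator_nonneg (fun ω _ => towerX_nonneg hε hY _ ω) ω)
          ((integrable_const _).indicator hS) (ae_of_all _ hle)
    _ = 2 * ε := by
        rw [integral_indicator_const _ hS, smul_eq_mul, measureReal_def, hprob, Fin.val_succ,
          show ε ^ ((k : ℕ) + 1 + 1) * (2 * (1 / ε) ^ ((k : ℕ) + 1))
            = 2 * ε * (ε * (1 / ε)) ^ ((k : ℕ) + 1) by ring,
          mul_one_div_cancel hε.ne', one_pow, mul_one]

open scoped Classical in
theorem integral_algValue_towerX_le [IsFiniteMeasure μ] (hε : 0 < ε) (hε1 : ε ≤ 1)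
    (hmeas : ∀ j, Measurable (Y j)) (hY : IsTowerValued ε Y)
    (hprob : ∀ j, (μ (towerHigh ε Y j)).toReal = ε ^ ((j : ℕ) + 1)) (τ : ℝ) :
    ∫ ω, algValue (towerX ε Y) τ ω ∂μ ≤ 1 + ε + n * (2 * ε) := by
  set F := univ.filter (IsFirstReach (fun j : Fin (n + 1) => (1 / ε) ^ ((j : ℕ) + 1)) τ)
  have hF : F.card ≤ 1 :=
    card_le_one.mpr fun i hi j hj => IsFirstReach.eq (mem_filter.mp hi).2 (mem_filter.mp hj).2
  have hint := integrable_towerX (μ := μ) hmeas hY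
  have hint' : ∀ k : Fin n,
      Integrable ((towerHigh ε Y k.succ).indicator (towerX ε Y k.castSucc)) μ :=
    fun k => (hint _).indicator (measurableSet_towerHigh hmeas _)
  calc ∫ ω, algValue (towerX ε Y) τ ω ∂μ
      ≤ ∫ ω, (∑ i ∈ F, towerX ε Y i ω +
          ∑ k : Fin n, (towerHigh ε Y k.succ).indicator (towerX ε Y k.castSucc) ω) ∂μ :=
        integral_mono_of_nonneg (ae_of_all _ fun ω => algValue_nonneg (towerX_nonneg hε hY · ω))
          ((integrable_finsetSum _ fun i _ => hint i).add
            (integrable_finsetSum _ fun k _ => hint' k))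
          (ae_of_all _ (algValue_towerX_le hε hε1 hY τ))
    _ = ∑ i ∈ F, ∫ ω, towerX ε Y i ω ∂μ +
          ∑ k : Fin n, ∫ ω, (towerHigh ε Y k.succ).indicator (towerX ε Y k.castSucc) ω ∂μ := by
        rw [integral_add (integrable_finsetSum _ fun i _ => hint i)
          (integrable_finsetSum _ fun k _ => hint' k), integral_finsetSum _ fun i _ => hint i,
          integral_finsetSum _ fun k _ => hint' k]
    _ ≤ F.card • (1 + ε) + (univ : Finset (Fin n)).card • (2 * ε) :=
        add_le_add (sum_le_card_nsmul _ _ _ fun i _ => integral_towerX_le hε hmeas hY hprob i)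
          (sum_le_card_nsmul _ _ _ fun k _ => integral_indicator_towerX_le hε hmeas hY hprob k)
    _ ≤ 1 + ε + n * (2 * ε) := by
        rw [nsmul_eq_mul, nsmul_eq_mul, card_univ, Fintype.card_fin]
        have hF' : (F.card : ℝ) ≤ 1 := by exact_mod_cast hF
        nlinarith

end tower

theorem stmt5_general {Ω : Type*} [MeasurableSpace Ω] (μ : Measure Ω) [IsProbabilityMeasure μ]
    {n : ℕ} (ε : ℝ) (hε0 : 0 < ε) (hε : ε ≤ 1 / (n + 1))
    (Y X : Fin (n + 1) → Ω → ℝ) (hmeas : ∀ j, Measurable (Y j))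
    (hval : ∀ j ω, Y j ω = (1 / ε) ^ ((j : ℕ) + 1) ∨ Y j ω = 0)
    (hprob : ∀ j, (μ {ω | Y j ω = (1 / ε) ^ ((j : ℕ) + 1)}).toReal = ε ^ ((j : ℕ) + 1))
    (hX : ∀ (i : Fin (n + 1)) ω,
      X i ω = Y i ω + (if h : (i : ℕ) + 1 < n + 1 then ε * Y ⟨(i : ℕ) + 1, h⟩ ω else 0))
    (τ : ℝ) :
    ∫ ω, algValue X τ ω ∂μ ≤ 3 := by
  obtain rfl : X = towerX ε Y := funext fun i => funext (hX i)
  have hnε : ε * (n + 1) ≤ 1 := (le_div_iff₀ (by positivity)).mp hε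
  have hε1 : ε ≤ 1 := by nlinarith [(n.cast_nonneg : (0 : ℝ) ≤ n)]
  have hbound := integral_algValue_towerX_le (μ := μ) hε0 hε1 hmeas hval hprob τ
  linarith

/-- On the 2-sparse tower instance `X_i = Y_i + ε·Y_{i+1}` (and `X_n = Y_n`) with tower
variables `Y_j = ε^{-(j+1)}` w.p. `ε^{j+1}`, any fixed-threshold algorithm has expected
reward at most 3, provided `0 < ε ≤ 1/(n+1)`. -/
theorem stmt5 {Ω : Type*} [MeasurableSpace Ω] (μ : Measure Ω) [IsProbabilityMeasure μ]
    {n : ℕ} (ε : ℝ) (hε0 : 0 < ε) (hε : ε ≤ 1 / (n + 1))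
    (Y X : Fin (n + 1) → Ω → ℝ) (hmeas : ∀ j, Measurable (Y j))
    (hindep : iIndepFun Y μ)
    (hval : ∀ j ω, Y j ω = (1 / ε) ^ ((j : ℕ) + 1) ∨ Y j ω = 0)
    (hprob : ∀ j, (μ {ω | Y j ω = (1 / ε) ^ ((j : ℕ) + 1)}).toReal = ε ^ ((j : ℕ) + 1))
    (hX : ∀ (i : Fin (n + 1)) ω,
      X i ω = Y i ω + (if h : (i : ℕ) + 1 < n + 1 then ε * Y ⟨(i : ℕ) + 1, h⟩ ω else 0))
    (τ : ℝ) (hτ : 0 ≤ τ) :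
    ∫ ω, algValue X τ ω ∂μ ≤ 3 :=
  stmt5_general μ ε hε0 hε Y X hmeas hval hprob hX τ
end

section
/- Fix ε ∈ (0, 1/2) with ε^n < 2, and the tower variables Y_j = 1/ε^j with probability ε^j (else 0), independent, with X_i = Σ_{j≥i} ε^{j−i} Y_j for i = 1,...,n. Then Pr[∃ j > i with Y_j = 1/ε^j | X_i = 1/ε^i] ≤ ε. -/
open MeasureTheory ProbabilityTheory Finset

/-!
Every active `Y j` with `j ≥ i` contributes exactly `ε^{-(i+1)}` to `X i`, so `X i = ε^{-(i+1)}`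
means that exactly one of them is active. By independence, the event that `Y j` is the sole
active one has probability `p_j ∏_{k ≠ j} (1 - p_k)` with `p_j = ε^{j+1}`; as `p_j ≤ p_i` for
`j ≥ i`, this is at most `p_j / p_i = ε^{j-i}` times the probability that `Y i` is the sole
active one. Summing the geometric series gives `(1 - ε) P(some j > i active, X i = ε^{-(i+1)}) ≤
ε P(only Y i active)`, and the latter event is the rest of `{X i = ε^{-(i+1)}}`.
-/

lemma pow_sub_mul_one_div_pow {K : Type*} [Field K] {ε : K} (hε : ε ≠ 0) {i j : ℕ}
    (hij : i ≤ j) : ε ^ (j - i) * (1 / ε) ^ (j + 1) = (1 / ε) ^ (i + 1) := by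
  obtain ⟨d, rfl⟩ := Nat.exists_eq_add_of_le hij
  rw [Nat.add_sub_cancel_left, show i + d + 1 = d + (i + 1) by omega, pow_add, ← mul_assoc,
    ← mul_pow, mul_one_div_cancel hε, one_pow, one_mul]

lemma one_sub_mul_sum_pow_le {ι : Type*} {ρ : ℝ} (h0 : 0 ≤ ρ) (h1 : ρ ≤ 1) {t : Finset ι}
    {e : ι → ℕ} (he : Set.InjOn e t) (he0 : ∀ j ∈ t, e j ≠ 0) :
    (1 - ρ) * ∑ j ∈ t, ρ ^ e j ≤ ρ := by
  classical
  rw [← sum_image he]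
  set N := (t.image e).sup id + 1
  have hsub : t.image e ⊆ Ico 1 N := by
    intro m hm
    obtain ⟨j, hj, rfl⟩ := mem_image.mp hm
    exact mem_Ico.mpr ⟨Nat.one_le_iff_ne_zero.mpr (he0 j hj),
      Nat.lt_succ_of_le (le_sup (f := id) hm)⟩
  calc (1 - ρ) * ∑ m ∈ t.image e, ρ ^ m
      ≤ (1 - ρ) * ∑ m ∈ Ico 1 N, ρ ^ m := by
        gcongr
    _ = ρ - ρ ^ N := by rw [mul_comm, geom_sum_Ico_mul_neg _ (by omega), pow_one]
    _ ≤ ρ := sub_le_self _ (pow_nonneg h0 _)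

lemma Finset.sum_mul_eq_iff_eq_ite {ι R : Type*} [DecidableEq ι] [Field R] [CharZero R]
    {s : Finset ι} {w y c : ι → R} {C : R}
    (hC : C ≠ 0) (hwc : ∀ k ∈ s, w k * c k = C) (hy : ∀ k ∈ s, y k = c k ∨ y k = 0) :
    ∑ k ∈ s, w k * y k = C ↔ ∃ j ∈ s, ∀ k ∈ s, y k = if k = j then c k else 0 := by
  classical
  constructor
  · intro hsum
    have hterm : ∀ k ∈ s, w k * y k = if y k ≠ 0 then C else 0 := by
      intro k hk
      have hc : c k ≠ 0 := right_ne_zero_of_mul (hwc k hk ▸ hC)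
      rcases hy k hk with h | h <;> simp [h, hwc k hk, hc]
    rw [sum_congr rfl hterm, ← sum_filter, sum_const, nsmul_eq_mul, mul_eq_right₀ hC,
      Nat.cast_eq_one, card_eq_one] at hsum
    obtain ⟨j, hj⟩ := hsum
    have hjS : j ∈ s.filter (y · ≠ 0) := hj ▸ mem_singleton_self j
    refine ⟨j, (mem_filter.mp hjS).1, fun k hk => ?_⟩
    split_ifs with hkj
    · subst hkj
      exact (hy k hk).resolve_right (mem_filter.mp hjS).2
    · by_contra h
      exact hkj (mem_singleton.mp (hj ▸ mem_filter.mpr ⟨hk, h⟩))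
  · rintro ⟨j, hj, hy⟩
    rw [sum_eq_single_of_mem j hj fun k hk hkj => by simp [hy k hk, hkj]]
    simp [hy j hj, hwc j hj]

lemma mul_mul_prod_erase_le {ι : Type*} [DecidableEq ι] {s : Finset ι} {p : ι → ℝ} {i j : ι}
    (hp0 : ∀ k ∈ s, 0 ≤ p k) (hp1 : ∀ k ∈ s, p k ≤ 1) (hi : i ∈ s) (hj : j ∈ s)
    (hji : p j ≤ p i) :
    p i * (p j * ∏ k ∈ s.erase j, (1 - p k)) ≤ p j * (p i * ∏ k ∈ s.erase i, (1 - p k)) := by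
  rcases eq_or_ne i j with rfl | hij
  · exact le_of_eq (mul_left_comm _ _ _)
  rw [← mul_prod_erase (s.erase j) _ (mem_erase.mpr ⟨hij, hi⟩),
    ← mul_prod_erase (s.erase i) _ (mem_erase.mpr ⟨hij.symm, hj⟩), erase_right_comm]
  have hR : 0 ≤ ∏ k ∈ (s.erase i).erase j, (1 - p k) :=
    prod_nonneg fun k hk => sub_nonneg.mpr (hp1 k (mem_of_mem_erase (mem_of_mem_erase hk)))
  have := mul_nonneg (mul_nonneg (mul_nonneg (hp0 i hi) (hp0 j hj)) hR) (sub_nonneg.mpr hji)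
  linear_combination this

section SoleActive

variable {ι Ω : Type*} [DecidableEq ι] {Y : ι → Ω → ℝ} {c : ι → ℝ} {s t : Finset ι} {i j k : ι}

def soleActive (Y : ι → Ω → ℝ) (c : ι → ℝ) (s : Finset ι) (j : ι) : Set Ω :=
  ⋂ k ∈ s, Y k ⁻¹' {if k = j then c k else 0}

lemma mem_soleActive {ω : Ω} :
    ω ∈ soleActive Y c s j ↔ ∀ k ∈ s, Y k ω = if k = j then c k else 0 := by
  simp [soleActive]

lemma apply_eq_iff_of_mem_soleActive {ω : Ω} (hω : ω ∈ soleActive Y c s j) (hk : k ∈ s)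
    (hc : c k ≠ 0) : Y k ω = c k ↔ k = j := by
  rw [mem_soleActive.mp hω k hk]
  split_ifs with hkj <;> simp [hkj, Ne.symm hc]

lemma pairwiseDisjoint_soleActive (hc : ∀ k ∈ s, c k ≠ 0) :
    (s : Set ι).PairwiseDisjoint (soleActive Y c s) := by
  intro j hj j' _ hjj'
  refine Set.disjoint_left.mpr fun ω hω hω' => hjj' ?_
  rw [← apply_eq_iff_of_mem_soleActive hω' hj (hc j hj)]
  exact (apply_eq_iff_of_mem_soleActive hω hj (hc j hj)).mpr rfl

lemma setOf_sum_mul_eq_eq_biUnion_soleActive {w : ι → ℝ} {C : ℝ} (hC : C ≠ 0)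
    (hwc : ∀ k ∈ s, w k * c k = C) (hval : ∀ k ∈ s, ∀ ω, Y k ω = c k ∨ Y k ω = 0) :
    {ω | ∑ k ∈ s, w k * Y k ω = C} = ⋃ j ∈ s, soleActive Y c s j := by
  ext ω
  simp only [Set.mem_ofPred_eq, Set.mem_iUnion, exists_prop, mem_soleActive]
  exact sum_mul_eq_iff_eq_ite hC hwc fun k hk => hval k hk ω

lemma setOf_exists_eq_inter_biUnion_soleActive (ht : t ⊆ s) (hc : ∀ k ∈ s, c k ≠ 0) :
    {ω | ∃ j ∈ t, Y j ω = c j} ∩ ⋃ j ∈ s, soleActive Y c s j = ⋃ j ∈ t, soleActive Y c s j := by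
  ext ω
  simp only [Set.mem_inter_iff, Set.mem_ofPred_eq, Set.mem_iUnion, exists_prop]
  constructor
  · rintro ⟨⟨j', hj't, hY⟩, j, -, hω⟩
    obtain rfl := (apply_eq_iff_of_mem_soleActive hω (ht hj't) (hc j' (ht hj't))).mp hY
    exact ⟨j', hj't, hω⟩
  · rintro ⟨j, hjt, hω⟩
    exact ⟨⟨j, hjt, (apply_eq_iff_of_mem_soleActive hω (ht hjt) (hc j (ht hjt))).mpr rfl⟩,
      j, ht hjt, hω⟩

variable [MeasurableSpace Ω] {μ : Measure Ω}

lemma measurableSet_soleActive (hmeas : ∀ k, Measurable (Y k)) :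
    MeasurableSet (soleActive Y c s j) :=
  s.measurableSet_biInter fun k _ => hmeas k (measurableSet_singleton _)

lemma probReal_eq_zero_eq_one_sub [IsProbabilityMeasure μ] {Z : Ω → ℝ} {a : ℝ}
    (hZ : Measurable Z) (hval : ∀ ω, Z ω = a ∨ Z ω = 0) (ha : a ≠ 0) :
    μ.real {ω | Z ω = 0} = 1 - μ.real {ω | Z ω = a} := by
  have : {ω | Z ω = 0} = {ω | Z ω = a}ᶜ := by
    ext ω
    rcases hval ω with h | h <;> simp [h, ha, Ne.symm ha]
  rw [this]
  exact probReal_compl_eq_one_sub (hZ (measurableSet_singleton a))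

lemma probReal_soleActive [IsProbabilityMeasure μ] (hindep : iIndepFun Y μ)
    (hmeas : ∀ k, Measurable (Y k)) (hval : ∀ k ∈ s, ∀ ω, Y k ω = c k ∨ Y k ω = 0)
    (hc : ∀ k ∈ s, c k ≠ 0) (hj : j ∈ s) :
    μ.real (soleActive Y c s j) =
      μ.real {ω | Y j ω = c j} * ∏ k ∈ s.erase j, (1 - μ.real {ω | Y k ω = c k}) := by
  rw [measureReal_def, soleActive,
    hindep.measure_inter_preimage_eq_mul s fun k _ => measurableSet_singleton _,
    ENNReal.toReal_prod, ← mul_prod_erase s _ hj, if_pos rfl]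
  congr 1
  refine prod_congr rfl fun k hk => ?_
  have hks := mem_of_mem_erase hk
  rw [if_neg (ne_of_mem_erase hk)]
  exact probReal_eq_zero_eq_one_sub (hmeas k) (hval k hks) (hc k hks)

lemma mul_probReal_soleActive_le [IsProbabilityMeasure μ] (hindep : iIndepFun Y μ)
    (hmeas : ∀ k, Measurable (Y k)) (hval : ∀ k ∈ s, ∀ ω, Y k ω = c k ∨ Y k ω = 0)
    (hc : ∀ k ∈ s, c k ≠ 0) (hi : i ∈ s) (hj : j ∈ s)
    (hji : μ.real {ω | Y j ω = c j} ≤ μ.real {ω | Y i ω = c i}) :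
    μ.real {ω | Y i ω = c i} * μ.real (soleActive Y c s j) ≤
      μ.real {ω | Y j ω = c j} * μ.real (soleActive Y c s i) := by
  rw [probReal_soleActive hindep hmeas hval hc hi, probReal_soleActive hindep hmeas hval hc hj]
  exact mul_mul_prod_erase_le (p := fun k => μ.real {ω | Y k ω = c k})
    (fun _ _ => measureReal_nonneg) (fun _ _ => measureReal_le_one) hi hj hji

lemma one_sub_mul_sum_probReal_soleActive_erase_le [IsProbabilityMeasure μ]
    (hindep : iIndepFun Y μ) (hmeas : ∀ k, Measurable (Y k))
    (hval : ∀ k ∈ s, ∀ ω, Y k ω = c k ∨ Y k ω = 0) (hc : ∀ k ∈ s, c k ≠ 0) (hi : i ∈ s)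
    {ρ : ℝ} (hρ0 : 0 ≤ ρ) (hρ1 : ρ ≤ 1) {e : ι → ℕ} (he : Set.InjOn e (s.erase i))
    (he0 : ∀ j ∈ s.erase i, e j ≠ 0) (hpi : 0 < μ.real {ω | Y i ω = c i})
    (hp : ∀ j ∈ s.erase i, μ.real {ω | Y j ω = c j} = ρ ^ e j * μ.real {ω | Y i ω = c i}) :
    (1 - ρ) * ∑ j ∈ s.erase i, μ.real (soleActive Y c s j) ≤
      ρ * μ.real (soleActive Y c s i) := by
  have hratio : ∀ j ∈ s.erase i,
      μ.real (soleActive Y c s j) ≤ ρ ^ e j * μ.real (soleActive Y c s i) := by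
    intro j hj
    refine le_of_mul_le_mul_left ?_ hpi
    have hji : μ.real {ω | Y j ω = c j} ≤ μ.real {ω | Y i ω = c i} :=
      hp j hj ▸ mul_le_of_le_one_left hpi.le (pow_le_one₀ hρ0 hρ1)
    calc _ ≤ _ := mul_probReal_soleActive_le hindep hmeas hval hc hi (mem_of_mem_erase hj) hji
      _ = _ := by rw [hp j hj]; ring
  calc (1 - ρ) * ∑ j ∈ s.erase i, μ.real (soleActive Y c s j)
      ≤ (1 - ρ) * ∑ j ∈ s.erase i, ρ ^ e j * μ.real (soleActive Y c s i) := by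
        gcongr with j hj
        exact hratio j hj
    _ = ((1 - ρ) * ∑ j ∈ s.erase i, ρ ^ e j) * μ.real (soleActive Y c s i) := by
        rw [← sum_mul, mul_assoc]
    _ ≤ ρ * μ.real (soleActive Y c s i) :=
        mul_le_mul_of_nonneg_right (one_sub_mul_sum_pow_le hρ0 hρ1 he he0) measureReal_nonneg

end SoleActive

theorem stmt6_general {Ω : Type*} [MeasurableSpace Ω] (μ : Measure Ω) [IsProbabilityMeasure μ]
    {n : ℕ} (ε : ℝ) (hε0 : 0 < ε) (hε : ε < 1 / 2)
    (Y X : Fin (n + 1) → Ω → ℝ) (hmeas : ∀ j, Measurable (Y j))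
    (hindep : iIndepFun Y μ)
    (hval : ∀ j ω, Y j ω = (1 / ε) ^ ((j : ℕ) + 1) ∨ Y j ω = 0)
    (hprob : ∀ j, (μ {ω | Y j ω = (1 / ε) ^ ((j : ℕ) + 1)}).toReal = ε ^ ((j : ℕ) + 1))
    (hX : ∀ (i : Fin (n + 1)) ω,
      X i ω = ∑ j ∈ Finset.univ.filter (fun j => i ≤ j), ε ^ ((j : ℕ) - (i : ℕ)) * Y j ω)
    (i : Fin (n + 1)) :
    (μ {ω | (∃ j, i < j ∧ Y j ω = (1 / ε) ^ ((j : ℕ) + 1)) ∧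
        X i ω = (1 / ε) ^ ((i : ℕ) + 1)}).toReal
      ≤ ε * (μ {ω | X i ω = (1 / ε) ^ ((i : ℕ) + 1)}).toReal := by
  set c : Fin (n + 1) → ℝ := fun j => (1 / ε) ^ ((j : ℕ) + 1)
  set F : Finset (Fin (n + 1)) := univ.filter (i ≤ ·)
  have hc : ∀ j ∈ F, c j ≠ 0 := fun j _ => by positivity
  have hiF : i ∈ F := by simp [F]
  have hlt : ∀ j ∈ F.erase i, i < j := fun j hj =>
    lt_of_le_of_ne (mem_filter.mp (mem_of_mem_erase hj)).2 (ne_of_mem_erase hj).symm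
  have hE : {ω | X i ω = c i} = ⋃ j ∈ F, soleActive Y c F j := by
    simp only [hX]
    exact setOf_sum_mul_eq_eq_biUnion_soleActive (hc i hiF)
      (fun j hj => pow_sub_mul_one_div_pow hε0.ne' (mem_filter.mp hj).2) fun k _ => hval k
  have hL : {ω | (∃ j, i < j ∧ Y j ω = c j) ∧ X i ω = c i} =
      ⋃ j ∈ F.erase i, soleActive Y c F j := by
    rw [← setOf_exists_eq_inter_biUnion_soleActive (erase_subset i F) hc, ← hE]
    ext ω
    simp [F, lt_iff_le_and_ne, ne_comm, and_comm]
  have hp : ∀ j, μ.real {ω | Y j ω = c j} = ε ^ ((j : ℕ) + 1) := hprob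
  have hbound := one_sub_mul_sum_probReal_soleActive_erase_le hindep hmeas (fun k _ => hval k)
    hc hiF hε0.le (hε.trans (by norm_num)).le (e := fun j => (j : ℕ) - i)
    (fun j hj j' hj' h => Fin.ext <| by
      have := hlt j hj; have := hlt j' hj'; dsimp only at h; omega)
    (fun j hj => by have := hlt j hj; omega) (by rw [hp]; positivity)
    fun j hj => by rw [hp, hp, ← pow_add]; congr 1; have := hlt j hj; omega
  change μ.real _ ≤ ε * μ.real _
  rw [hL, hE, measureReal_biUnion_finset (pairwiseDisjoint_soleActive hc)
      fun j _ => measurableSet_soleActive hmeas,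
    measureReal_biUnion_finset ((pairwiseDisjoint_soleActive hc).subset
      (coe_subset.mpr (erase_subset i F))) fun j _ => measurableSet_soleActive hmeas,
    ← add_sum_erase F _ hiF]
  linarith

/-- General tower instance `X_i = Σ_{j ≥ i} ε^{j−i} Y_j` with tower variables
`Y_j = ε^{-(j+1)}` w.p. `ε^{j+1}`:  conditioned on `X_i = ε^{-(i+1)}`, the probability
that some `Y_j` with `j > i` is active is at most `ε`. -/
theorem stmt6 {Ω : Type*} [MeasurableSpace Ω] (μ : Measure Ω) [IsProbabilityMeasure μ]
    {n : ℕ} (ε : ℝ) (hε0 : 0 < ε) (hε : ε < 1 / 2) (hεn : ε ^ (n + 1) < 2)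
    (Y X : Fin (n + 1) → Ω → ℝ) (hmeas : ∀ j, Measurable (Y j))
    (hindep : iIndepFun Y μ)
    (hval : ∀ j ω, Y j ω = (1 / ε) ^ ((j : ℕ) + 1) ∨ Y j ω = 0)
    (hprob : ∀ j, (μ {ω | Y j ω = (1 / ε) ^ ((j : ℕ) + 1)}).toReal = ε ^ ((j : ℕ) + 1))
    (hX : ∀ (i : Fin (n + 1)) ω,
      X i ω = ∑ j ∈ Finset.univ.filter (fun j => i ≤ j), ε ^ ((j : ℕ) - (i : ℕ)) * Y j ω)
    (i : Fin (n + 1)) :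
    (μ {ω | (∃ j, i < j ∧ Y j ω = (1 / ε) ^ ((j : ℕ) + 1)) ∧
        X i ω = (1 / ε) ^ ((i : ℕ) + 1)}).toReal
      ≤ ε * (μ {ω | X i ω = (1 / ε) ^ ((i : ℕ) + 1)}).toReal :=
  stmt6_general μ ε hε0 hε Y X hmeas hindep hval hprob hX i
end

section
/- Fix ε ∈ (0, 1/2) with ε^n < 2, and the general tower instance X_i = Σ_{j≥i} ε^{j−i} Y_j with tower variables Y_j. Every online algorithm that may fractionally take amounts p_i ≥ 0 of each arriving X_i subject to Σ_i p_i ≤ 1 has expected total reward Σ_i p_i X_i at most 1/(1−ε)². -/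
/-!
Call `j` active at `ω` when `Y j ω ≠ 0`. Every active `j ≥ k` contributes exactly `ε^-(k+1)` to
`X_k`, so `X_k` is `ε^-(k+1)` times the number of active `j ≥ k`; as every set of active indices has
positive probability, an adapted strategy is `p_i = P_i (active set)` with `P_i` depending only on
these counts for `k ≤ i`.

Fix `i ≤ j` and let `q` be `P_i` evaluated with `j` forced active. Then `q` is independent of `Y_j`
and equals `p_i` where `Y_j ≠ 0`, so `E[p_i Y_j] = E[q] E[Y_j] = E[q]`. Where `Y_j = 0`, forcing `j`
active looks the same up to time `i` as forcing the largest inactive index active; this defines a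
strategy `r` that does not depend on `j`, with `∑ r_i ≤ 1`. Hence `E[q] ≤ ε^(j+1) E[q] + E[r_i]`,
i.e. `E[p_i Y_j] ≤ E[r_i] / (1 - ε)`, and summing
`E[p_i X_i] = ∑_{j ≥ i} ε^(j-i) E[p_i Y_j] ≤ E[r_i] / (1 - ε)^2` over `i` gives the bound.
-/

open MeasureTheory ProbabilityTheory Finset

theorem Measurable.eq_of_comap_eq {α β γ : Type*} [mβ : MeasurableSpace β] [MeasurableSpace γ]
    [MeasurableSingletonClass γ] {f : α → β} {g : α → γ} (hg : Measurable[mβ.comap f] g)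
    {a a' : α} (h : f a = f a') : g a = g a' := by
  obtain ⟨t, -, ht⟩ := hg (measurableSet_singleton (g a))
  have ha : a ∈ f ⁻¹' t := by rw [ht]; rfl
  have ha' : a' ∈ g ⁻¹' {g a} := by rw [← ht]; simpa [h] using ha
  exact ha'.symm

theorem measurable_comp_filter_univ {α ι β : Type*} {m : MeasurableSpace α} [MeasurableSpace β]
    [Fintype ι] [DecidableEq ι] {p : ι → α → Prop} [∀ l a, Decidable (p l a)]
    (hp : ∀ l, MeasurableSet {a | p l a}) (g : Finset ι → β) :
    Measurable fun a => g (univ.filter fun l => p l a) := by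
  have hfiber : ∀ s : Finset ι, MeasurableSet {a | univ.filter (fun l => p l a) = s} := by
    intro s
    have : {a | univ.filter (fun l => p l a) = s} = ⋂ l, {a | p l a ↔ l ∈ s} := by
      ext a; simp [Finset.ext_iff]
    rw [this]
    refine .iInter fun l => ?_
    by_cases hl : l ∈ s
    · simpa only [hl, iff_true] using hp l
    · simp only [hl, iff_false]
      exact (hp l).compl
  intro t _
  have : (fun a => g (univ.filter fun l => p l a)) ⁻¹' t
      = ⋃ s ∈ {s | g s ∈ t}, {a | univ.filter (fun l => p l a) = s} := by
    ext a; simp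
  rw [this]
  exact .biUnion (Set.to_countable _) fun s _ => hfiber s

namespace ProbabilityTheory.iIndepFun

variable {Ω ι : Type*} [MeasurableSpace Ω] {μ : Measure Ω}

theorem exists_forall_mem [Fintype ι] {β : ι → Type*} [∀ i, MeasurableSpace (β i)]
    {Y : ∀ i, Ω → β i} (hY : iIndepFun Y μ) {A : ∀ i, Set (β i)} (hA : ∀ i, MeasurableSet (A i))
    (hpos : ∀ i, μ (Y i ⁻¹' A i) ≠ 0) : ∃ ω, ∀ i, Y i ω ∈ A i := by
  have : μ (⋂ i, Y i ⁻¹' A i) ≠ 0 := by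
    rw [hY.meas_iInter fun i => ⟨A i, hA i, rfl⟩]
    exact prod_ne_zero_iff.mpr fun i _ => hpos i
  obtain ⟨ω, hω⟩ := nonempty_of_measure_ne_zero this
  exact ⟨ω, Set.mem_iInter.mp hω⟩

theorem exists_filter_ne_zero_eq [Fintype ι] [DecidableEq ι] {Y : ι → Ω → ℝ}
    (hY : iIndepFun Y μ) (hzero : ∀ j, μ {ω | Y j ω = 0} ≠ 0)
    (hne : ∀ j, μ {ω | Y j ω ≠ 0} ≠ 0) (s : Finset ι) :
    ∃ ω, univ.filter (fun j => Y j ω ≠ 0) = s := by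
  obtain ⟨ω, hω⟩ := hY.exists_forall_mem (A := fun j => if j ∈ s then {0}ᶜ else {0})
    (fun j => by split_ifs; exacts [(measurableSet_singleton 0).compl, measurableSet_singleton 0])
    (fun j => by split_ifs <;> simp_all [Set.preimage])
  refine ⟨ω, ext fun j => ?_⟩
  have := hω j
  by_cases hj : j ∈ s <;> simp_all

theorem indepFun_of_measurable_iSup_ne {β γ : Type*} [mβ : MeasurableSpace β] [MeasurableSpace γ]
    {Y : ι → Ω → β} (hY : iIndepFun Y μ) (hmeas : ∀ i, Measurable (Y i)) {j : ι} {g : Ω → γ}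
    (hg : Measurable[⨆ l ∈ ({j}ᶜ : Set ι), mβ.comap (Y l)] g) : IndepFun g (Y j) μ := by
  rw [IndepFun_iff_Indep]
  have h := indep_iSup_of_disjoint (fun l => (hmeas l).comap_le) hY.iIndep
    (disjoint_compl_left (a := ({j} : Set ι)))
  refine indep_of_indep_of_le_right (indep_of_indep_of_le_left h hg.comap_le) ?_
  exact le_iSup₂ (f := fun l (_ : l ∈ ({j} : Set ι)) => mβ.comap (Y l)) j rfl

end ProbabilityTheory.iIndepFun

theorem integral_mul_le_div_one_sub {Ω : Type*} [MeasurableSpace Ω] {μ : Measure Ω}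
    [IsProbabilityMeasure μ] {p q r Z : Ω → ℝ} {c a : ℝ} (hc : 0 < c)
    (hZ : ∀ ω, Z ω = c ∨ Z ω = 0) (hZmeas : Measurable Z) (hZ1 : ∫ ω, Z ω ∂μ = 1)
    (hca : c⁻¹ ≤ a) (ha : a < 1) (hqZ : IndepFun q Z μ) (hq : Measurable q)
    (hq0 : ∀ ω, 0 ≤ q ω) (hq1 : ∀ ω, q ω ≤ 1) (hr : Integrable r μ) (hr0 : ∀ ω, 0 ≤ r ω)
    (hpq : ∀ ω, Z ω ≠ 0 → p ω = q ω) (hqr : ∀ ω, Z ω = 0 → q ω = r ω) :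
    ∫ ω, p ω * Z ω ∂μ ≤ (∫ ω, r ω ∂μ) / (1 - a) := by
  have hZint : Integrable Z μ := .of_integral_ne_zero (by simp [hZ1])
  have hqZint : Integrable (fun ω => q ω * Z ω) μ :=
    hZint.bdd_mul (c := 1) hq.aestronglyMeasurable
      (ae_of_all _ fun ω => abs_le.2 ⟨by linarith [hq0 ω], hq1 ω⟩)
  have hpZ : ∫ ω, p ω * Z ω ∂μ = ∫ ω, q ω ∂μ := by
    have : ∀ ω, p ω * Z ω = q ω * Z ω := fun ω => by
      by_cases h : Z ω = 0
      · simp [h]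
      · rw [hpq ω h]
    rw [integral_congr_ae (ae_of_all _ this),
      hqZ.integral_fun_mul_eq_mul_integral hq.aestronglyMeasurable hZint.1, hZ1, mul_one]
  have hsplit : ∀ ω, q ω = c⁻¹ * (q ω * Z ω) + {ω | Z ω = 0}.indicator r ω := fun ω => by
    rcases hZ ω with h | h
    · simp [h, hc.ne', Set.indicator_of_notMem]
      field_simp
    · simp [h, hqr ω h]
  have hZ0 : MeasurableSet {ω | Z ω = 0} := hZmeas (measurableSet_singleton 0)
  have hind : ∫ ω, {ω | Z ω = 0}.indicator r ω ∂μ ≤ ∫ ω, r ω ∂μ := by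
    rw [integral_indicator hZ0]
    exact setIntegral_le_integral hr (ae_of_all _ hr0)
  have hq_eq : ∫ ω, q ω ∂μ = c⁻¹ * ∫ ω, q ω ∂μ + ∫ ω, {ω | Z ω = 0}.indicator r ω ∂μ := by
    calc ∫ ω, q ω ∂μ = ∫ ω, c⁻¹ * (q ω * Z ω) + {ω | Z ω = 0}.indicator r ω ∂μ :=
          integral_congr_ae (ae_of_all _ hsplit)
      _ = _ := by
          rw [integral_add (hqZint.const_mul _) (hr.indicator hZ0), integral_const_mul,
            hqZ.integral_fun_mul_eq_mul_integral hq.aestronglyMeasurable hZint.1, hZ1, mul_one]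
  have hca' : c⁻¹ * ∫ ω, q ω ∂μ ≤ a * ∫ ω, q ω ∂μ :=
    mul_le_mul_of_nonneg_right hca (integral_nonneg hq0)
  rw [hpZ, le_div_iff₀ (sub_pos.mpr ha)]
  linarith

theorem sum_filter_le_pow_sub_le {m : ℕ} {x : ℝ} (hx0 : 0 ≤ x) (hx1 : x < 1) (i : Fin m) :
    ∑ j ∈ univ.filter (fun j => i ≤ j), x ^ ((j : ℕ) - i) ≤ 1 / (1 - x) := by
  calc ∑ j ∈ univ.filter (fun j => i ≤ j), x ^ ((j : ℕ) - i)
      = ∑ t ∈ (univ.filter (fun j => i ≤ j)).image (fun j : Fin m => (j : ℕ) - i), x ^ t := by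
        refine (sum_image fun a ha b hb hab => ?_).symm
        simp only [coe_filter, mem_univ, true_and] at ha hb
        exact Fin.ext (by change i ≤ a at ha; change i ≤ b at hb; omega)
    _ ≤ ∑ t ∈ range m, x ^ t := by
        refine sum_le_sum_of_subset_of_nonneg ?_ fun _ _ _ => pow_nonneg hx0 _
        intro t ht
        obtain ⟨j, -, rfl⟩ := mem_image.1 ht
        exact mem_range.2 (by omega)
    _ ≤ 1 / (1 - x) := by
        have := geom_sum_Ico_le_of_lt_one (m := 0) (n := m) hx0 hx1
        rwa [← range_eq_Ico, pow_zero] at this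

theorem sum_sum_filter_pow_mul_le {m : ℕ} {ε : ℝ} (hε0 : 0 ≤ ε) (hε1 : ε < 1)
    {A : Fin m → Fin m → ℝ} {b : Fin m → ℝ} (hA : ∀ i j, i ≤ j → A i j ≤ b i / (1 - ε))
    (hb0 : ∀ i, 0 ≤ b i) (hb : ∑ i, b i ≤ 1) :
    ∑ i : Fin m, ∑ j ∈ univ.filter (fun j => i ≤ j), ε ^ ((j : ℕ) - i) * A i j
      ≤ 1 / (1 - ε) ^ 2 := by
  have h1ε : 0 < 1 - ε := by linarith
  calc ∑ i : Fin m, ∑ j ∈ univ.filter (fun j => i ≤ j), ε ^ ((j : ℕ) - i) * A i j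
      ≤ ∑ i : Fin m,
          (∑ j ∈ univ.filter (fun j => i ≤ j), ε ^ ((j : ℕ) - i)) * (b i / (1 - ε)) := by
        simp_rw [sum_mul]
        gcongr with i _ j hj
        exact hA i j (mem_filter.1 hj).2
    _ ≤ ∑ i : Fin m, 1 / (1 - ε) * (b i / (1 - ε)) := by
        gcongr with i
        · exact div_nonneg (hb0 i) h1ε.le
        · exact sum_filter_le_pow_sub_le hε0 hε1 i
    _ = (∑ i, b i) / (1 - ε) ^ 2 := by
        rw [sum_div]
        exact sum_congr rfl fun i _ => by field_simp
    _ ≤ 1 / (1 - ε) ^ 2 := by gcongr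

theorem integral_sum_mul_sum_pow_mul {Ω : Type*} [MeasurableSpace Ω] {μ : Measure Ω} {m : ℕ}
    {ε : ℝ} {Y X p : Fin m → Ω → ℝ}
    (hX : ∀ i ω, X i ω = ∑ j ∈ univ.filter (fun j => i ≤ j), ε ^ ((j : ℕ) - i) * Y j ω)
    (hint : ∀ i j, Integrable (fun ω => p i ω * Y j ω) μ) :
    ∫ ω, ∑ i, p i ω * X i ω ∂μ
      = ∑ i : Fin m, ∑ j ∈ univ.filter (fun j => i ≤ j),
          ε ^ ((j : ℕ) - i) * ∫ ω, p i ω * Y j ω ∂μ := by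
  simp_rw [hX, mul_sum, mul_left_comm (p _ _)]
  rw [integral_finsetSum _ fun i _ => integrable_finsetSum _ fun j _ => (hint i j).const_mul _]
  refine sum_congr rfl fun i _ => ?_
  rw [integral_finsetSum _ fun j _ => (hint i j).const_mul _]
  exact sum_congr rfl fun j _ => integral_const_mul _ _

section Tower

variable {n : ℕ}

/-- `X_k` when the nonzero tower variables are exactly the `Y_j` with `j ∈ s`: each such `j ≥ k`
contributes `ε ^ (j - k) * (1 / ε) ^ (j + 1) = (1 / ε) ^ (k + 1)`. -/
noncomputable def towerValue (ε : ℝ) (s : Finset (Fin (n + 1))) (k : Fin (n + 1)) : ℝ :=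
  #(s.filter (k ≤ ·)) * (1 / ε) ^ ((k : ℕ) + 1)

noncomputable def activeSet {Ω : Type*} (Y : Fin (n + 1) → Ω → ℝ) (ω : Ω) :
    Finset (Fin (n + 1)) :=
  univ.filter fun j => Y j ω ≠ 0

noncomputable def insertMaxCompl (s : Finset (Fin (n + 1))) : Finset (Fin (n + 1)) :=
  insert (sᶜ.sup id) s

theorem sum_pow_mul_eq_towerValue {ε : ℝ} (hε : ε ≠ 0) {y : Fin (n + 1) → ℝ}
    (hy : ∀ j, y j = (1 / ε) ^ ((j : ℕ) + 1) ∨ y j = 0) (k : Fin (n + 1)) :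
    ∑ j ∈ univ.filter (fun j => k ≤ j), ε ^ ((j : ℕ) - k) * y j
      = towerValue ε (univ.filter fun j => y j ≠ 0) k := by
  have hterm : ∀ j ∈ (univ.filter (fun j => k ≤ j)).filter (fun j => y j ≠ 0),
      ε ^ ((j : ℕ) - k) * y j = (1 / ε) ^ ((k : ℕ) + 1) := by
    intro j hj
    simp only [mem_filter, mem_univ, true_and] at hj
    rw [(hy j).resolve_right hj.2, show (j : ℕ) + 1 = ((j : ℕ) - k) + ((k : ℕ) + 1) by
      have : (k : ℕ) ≤ j := hj.1; omega, pow_add, ← mul_assoc, ← mul_pow, mul_one_div_cancel hε,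
      one_pow, one_mul]
  rw [← sum_filter_of_ne (p := fun j => y j ≠ 0) fun j _ h hj => h (by rw [hj, mul_zero]),
    sum_congr rfl hterm, sum_const, nsmul_eq_mul, towerValue, filter_filter, filter_filter]
  simp_rw [and_comm]

theorem towerValue_insert {ε : ℝ} {s : Finset (Fin (n + 1))} {j k : Fin (n + 1)} (hj : j ∉ s)
    (hkj : k ≤ j) : towerValue ε (insert j s) k = towerValue ε s k + (1 / ε) ^ ((k : ℕ) + 1) := by
  rw [towerValue, towerValue, filter_insert, if_pos hkj,
    card_insert_of_notMem fun h => hj (mem_of_mem_filter j h)]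
  push_cast
  ring

theorem towerValue_insert_eq_insertMaxCompl {ε : ℝ} {s : Finset (Fin (n + 1))}
    {j k : Fin (n + 1)} (hj : j ∉ s) (hkj : k ≤ j) :
    towerValue ε (insert j s) k = towerValue ε (insertMaxCompl s) k := by
  obtain ⟨t, ht, hteq⟩ := exists_mem_eq_sup sᶜ ⟨j, mem_compl.2 hj⟩ id
  have hjt : j ≤ sᶜ.sup id := le_sup (f := id) (mem_compl.2 hj)
  rw [hteq, id] at hjt
  rw [insertMaxCompl, hteq, id, towerValue_insert hj hkj,
    towerValue_insert (mem_compl.1 ht) (hkj.trans hjt)]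

variable {Ω : Type*} [MeasurableSpace Ω] {μ : Measure Ω} {ε : ℝ} {Y : Fin (n + 1) → Ω → ℝ}

theorem measurable_comp_activeSet {β : Type*} [MeasurableSpace β] (hmeas : ∀ j, Measurable (Y j))
    (g : Finset (Fin (n + 1)) → β) : Measurable fun ω => g (activeSet Y ω) :=
  measurable_comp_filter_univ (p := fun l ω => Y l ω ≠ 0)
    (fun l => (hmeas l (measurableSet_singleton 0)).compl) g

structure IsTowerFamily (ε : ℝ) (Y : Fin (n + 1) → Ω → ℝ) (μ : Measure Ω) : Prop where
  measurable : ∀ j, Measurable (Y j)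
  indep : iIndepFun Y μ
  val : ∀ j ω, Y j ω = (1 / ε) ^ ((j : ℕ) + 1) ∨ Y j ω = 0
  prob : ∀ j, (μ {ω | Y j ω = (1 / ε) ^ ((j : ℕ) + 1)}).toReal = ε ^ ((j : ℕ) + 1)

namespace IsTowerFamily

theorem integral_eq_one (hY : IsTowerFamily ε Y μ) (hε : ε ≠ 0) (j : Fin (n + 1)) :
    ∫ ω, Y j ω ∂μ = 1 := by
  have hc : (1 / ε) ^ ((j : ℕ) + 1) ≠ 0 := by positivity
  have hA : MeasurableSet {ω | Y j ω = (1 / ε) ^ ((j : ℕ) + 1)} :=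
    hY.measurable j (measurableSet_singleton _)
  have hYj : Y j = {ω | Y j ω = (1 / ε) ^ ((j : ℕ) + 1)}.indicator
      fun _ => (1 / ε) ^ ((j : ℕ) + 1) := by
    funext ω
    rcases hY.val j ω with h | h
    · rw [Set.indicator_of_mem (s := {ω | Y j ω = _}) h, h]
    · rw [Set.indicator_of_notMem (s := {ω | Y j ω = _}) (show Y j ω ≠ _ from h ▸ hc.symm), h]
  rw [hYj, integral_indicator_const _ hA, smul_eq_mul, Measure.real, hY.prob j, ← mul_pow,
    mul_one_div_cancel hε, one_pow]

theorem exists_activeSet_eq [IsProbabilityMeasure μ] (hY : IsTowerFamily ε Y μ) (hε0 : 0 < ε)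
    (hε1 : ε < 1) (s : Finset (Fin (n + 1))) : ∃ ω, activeSet Y ω = s := by
  have hne : ∀ j, {ω | Y j ω ≠ 0} = {ω | Y j ω = (1 / ε) ^ ((j : ℕ) + 1)} := fun j => by
    have hc : (1 / ε) ^ ((j : ℕ) + 1) ≠ 0 := by positivity
    ext ω
    rcases hY.val j ω with h | h <;> rw [Set.mem_ofPred_eq, Set.mem_ofPred_eq, h]
    exacts [iff_of_true hc rfl, iff_of_false (· rfl) hc.symm]
  refine hY.indep.exists_filter_ne_zero_eq (fun j h => ?_) (fun j h => ?_) s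
  · have hzero : {ω | Y j ω = 0} = {ω | Y j ω ≠ 0}ᶜ := by ext; simp
    rw [hzero, hne, prob_compl_eq_zero_iff (s := {ω | Y j ω = _})
      (hY.measurable j (measurableSet_singleton _))] at h
    have := hY.prob j
    rw [h, ENNReal.toReal_one] at this
    exact (pow_lt_one₀ hε0.le hε1 (by omega)).ne' this
  · have := hY.prob j
    rw [← hne, h, ENNReal.toReal_zero] at this
    exact (pow_pos hε0 _).ne this

theorem integral_mul_le [IsProbabilityMeasure μ] (hY : IsTowerFamily ε Y μ) (hε0 : 0 < ε)
    (hε1 : ε < 1) {i j : Fin (n + 1)} (hij : i ≤ j) {P : Finset (Fin (n + 1)) → ℝ}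
    (hP0 : ∀ s, 0 ≤ P s) (hP1 : ∀ s, P s ≤ 1)
    (hP : ∀ s t, (∀ k ≤ i, towerValue ε s k = towerValue ε t k) → P s = P t) :
    ∫ ω, P (activeSet Y ω) * Y j ω ∂μ
      ≤ (∫ ω, P (insertMaxCompl (activeSet Y ω)) ∂μ) / (1 - ε) := by
  -- `q` runs the strategy as if `Y_j` were active, so it only depends on the `Y_l` with `l ≠ j`.
  have hq : Measurable[⨆ l ∈ ({j}ᶜ : Set (Fin (n + 1))), (borel ℝ).comap (Y l)]
      fun ω => P (insert j (activeSet Y ω)) := by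
    have : ∀ ω, insert j (activeSet Y ω) = insert j (univ.filter fun l => l ≠ j ∧ Y l ω ≠ 0) :=
      fun ω => by ext l; by_cases hl : l = j <;> simp [activeSet, hl]
    simp_rw [this]
    refine measurable_comp_filter_univ (p := fun l ω => l ≠ j ∧ Y l ω ≠ 0) (fun l => ?_)
      (fun s => P (insert j s))
    by_cases hl : l = j
    · simp [hl]
    · simp only [hl, ne_eq, not_false_eq_true, true_and]
      exact le_iSup₂ (f := fun l (_ : l ∈ ({j}ᶜ : Set _)) => (borel ℝ).comap (Y l)) l hl _
        ⟨{0}ᶜ, (measurableSet_singleton 0).compl, rfl⟩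
  refine integral_mul_le_div_one_sub (q := fun ω => P (insert j (activeSet Y ω)))
    (by positivity) (hY.val j) (hY.measurable j) (hY.integral_eq_one hε0.ne' j) ?_ hε1
    (hY.indep.indepFun_of_measurable_iSup_ne hY.measurable hq)
    (hq.mono (iSup₂_le fun l _ => (hY.measurable l).comap_le) le_rfl) (fun _ => hP0 _)
    (fun _ => hP1 _)
    (.of_mem_Icc 0 1 (measurable_comp_activeSet hY.measurable (P ∘ insertMaxCompl)).aemeasurable
      (ae_of_all _ fun _ => ⟨hP0 _, hP1 _⟩))
    (fun _ => hP0 _) (fun ω h => ?_) (fun ω h => ?_)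
  · rw [one_div, inv_pow, inv_inv]
    exact pow_le_of_le_one hε0.le hε1.le (by omega)
  · rw [insert_eq_of_mem (by simpa [activeSet] using h)]
  · have hj : j ∉ activeSet Y ω := by simpa [activeSet] using h
    exact hP _ _ fun k hk => towerValue_insert_eq_insertMaxCompl hj (hk.trans hij)

theorem integral_sum_mul_le [IsProbabilityMeasure μ] (hY : IsTowerFamily ε Y μ) (hε0 : 0 < ε)
    (hε1 : ε < 1) {X : Fin (n + 1) → Ω → ℝ}
    (hX : ∀ i ω, X i ω = ∑ j ∈ univ.filter (fun j => i ≤ j), ε ^ ((j : ℕ) - i) * Y j ω)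
    {P : Fin (n + 1) → Finset (Fin (n + 1)) → ℝ} (hP0 : ∀ i s, 0 ≤ P i s)
    (hPsum : ∀ s, ∑ i, P i s ≤ 1)
    (hP : ∀ i s t, (∀ k ≤ i, towerValue ε s k = towerValue ε t k) → P i s = P i t) :
    ∫ ω, ∑ i, P i (activeSet Y ω) * X i ω ∂μ ≤ 1 / (1 - ε) ^ 2 := by
  have hP1 : ∀ i s, P i s ≤ 1 := fun i s =>
    (single_le_sum (fun k _ => hP0 k s) (mem_univ i)).trans (hPsum s)
  have hPint : ∀ i (g : Finset (Fin (n + 1)) → Finset (Fin (n + 1))),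
      Integrable (fun ω => P i (g (activeSet Y ω))) μ := fun i g =>
    .of_mem_Icc 0 1 (measurable_comp_activeSet hY.measurable (P i ∘ g)).aemeasurable
      (ae_of_all _ fun _ => ⟨hP0 i _, hP1 i _⟩)
  have hint : ∀ i j, Integrable (fun ω => P i (activeSet Y ω) * Y j ω) μ := fun i j =>
    (Integrable.of_integral_ne_zero (by simp [hY.integral_eq_one hε0.ne' j])).bdd_mul
      (hPint i id).1 (ae_of_all _ fun ω => abs_le.2 ⟨by linarith [hP0 i (activeSet Y ω)], hP1 i _⟩)
  rw [integral_sum_mul_sum_pow_mul hX hint]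
  refine sum_sum_filter_pow_mul_le hε0.le hε1
    (fun i j hij => hY.integral_mul_le hε0 hε1 hij (hP0 i) (hP1 i) (hP i))
    (fun i => integral_nonneg fun ω => hP0 i _) ?_
  rw [← integral_finsetSum _ fun i _ => hPint i insertMaxCompl]
  calc ∫ ω, ∑ i, P i (insertMaxCompl (activeSet Y ω)) ∂μ ≤ ∫ _, 1 ∂μ :=
        integral_mono (integrable_finsetSum _ fun i _ => hPint i _) (integrable_const 1)
          fun ω => hPsum _
    _ = 1 := by simp

end IsTowerFamily

end Tower

theorem stmt7_general {Ω : Type*} [MeasurableSpace Ω] (μ : Measure Ω) [IsProbabilityMeasure μ]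
    {n : ℕ} (ε : ℝ) (hε0 : 0 < ε) (hε : ε < 1 / 2)
    (Y X : Fin (n + 1) → Ω → ℝ) (hmeas : ∀ j, Measurable (Y j))
    (hindep : iIndepFun Y μ)
    (hval : ∀ j ω, Y j ω = (1 / ε) ^ ((j : ℕ) + 1) ∨ Y j ω = 0)
    (hprob : ∀ j, (μ {ω | Y j ω = (1 / ε) ^ ((j : ℕ) + 1)}).toReal = ε ^ ((j : ℕ) + 1))
    (hX : ∀ (i : Fin (n + 1)) ω,
      X i ω = ∑ j ∈ Finset.univ.filter (fun j => i ≤ j), ε ^ ((j : ℕ) - (i : ℕ)) * Y j ω)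
    (p : Fin (n + 1) → Ω → ℝ)
    (hpnn : ∀ i ω, 0 ≤ p i ω) (hpsum : ∀ ω, ∑ i, p i ω ≤ 1)
    (hadapted : ∀ i, Measurable[MeasurableSpace.comap
      (fun ω => fun j : { j : Fin (n + 1) // j ≤ i } => X j ω) inferInstance] (p i)) :
    ∫ ω, ∑ i, p i ω * X i ω ∂μ ≤ 1 / (1 - ε) ^ 2 := by
  have hε1 : ε < 1 := by linarith
  have hY : IsTowerFamily ε Y μ := ⟨hmeas, hindep, hval, hprob⟩
  choose w hw using hY.exists_activeSet_eq hε0 hε1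
  have hXval : ∀ i ω, X i ω = towerValue ε (activeSet Y ω) i := fun i ω =>
    (hX i ω).trans (sum_pow_mul_eq_towerValue hε0.ne' (fun j => hval j ω) i)
  have hpw : ∀ i ω, p i ω = p i (w (activeSet Y ω)) := fun i ω =>
    (hadapted i).eq_of_comap_eq (funext fun k => by simp [hXval, hw])
  have hP : ∀ i s t, (∀ k ≤ i, towerValue ε s k = towerValue ε t k) → p i (w s) = p i (w t) :=
    fun i s t h => (hadapted i).eq_of_comap_eq (funext fun k => by simp [hXval, hw, h k k.2])
  calc ∫ ω, ∑ i, p i ω * X i ω ∂μ = ∫ ω, ∑ i, p i (w (activeSet Y ω)) * X i ω ∂μ := by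
        simp only [← hpw]
    _ ≤ 1 / (1 - ε) ^ 2 := hY.integral_sum_mul_le hε0 hε1 hX (fun i s => hpnn i (w s))
        (fun s => hpsum (w s)) hP

/-- On the general tower instance `X_i = Σ_{j ≥ i} ε^{j−i} Y_j`, every adapted fractional
online algorithm (taking fractions `p_i ≥ 0` of each `X_i`, with `Σ_i p_i ≤ 1`, where `p_i`
may depend only on `X_0, …, X_i`) has expected total reward at most `1/(1−ε)²`. -/
theorem stmt7 {Ω : Type*} [MeasurableSpace Ω] (μ : Measure Ω) [IsProbabilityMeasure μ]
    {n : ℕ} (ε : ℝ) (hε0 : 0 < ε) (hε : ε < 1 / 2) (hεn : ε ^ (n + 1) < 2)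
    (Y X : Fin (n + 1) → Ω → ℝ) (hmeas : ∀ j, Measurable (Y j))
    (hindep : iIndepFun Y μ)
    (hval : ∀ j ω, Y j ω = (1 / ε) ^ ((j : ℕ) + 1) ∨ Y j ω = 0)
    (hprob : ∀ j, (μ {ω | Y j ω = (1 / ε) ^ ((j : ℕ) + 1)}).toReal = ε ^ ((j : ℕ) + 1))
    (hX : ∀ (i : Fin (n + 1)) ω,
      X i ω = ∑ j ∈ Finset.univ.filter (fun j => i ≤ j), ε ^ ((j : ℕ) - (i : ℕ)) * Y j ω)
    (p : Fin (n + 1) → Ω → ℝ)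
    (hpnn : ∀ i ω, 0 ≤ p i ω) (hpsum : ∀ ω, ∑ i, p i ω ≤ 1)
    (hadapted : ∀ i, Measurable[MeasurableSpace.comap
      (fun ω => fun j : { j : Fin (n + 1) // j ≤ i } => X j ω) inferInstance] (p i)) :
    ∫ ω, ∑ i, p i ω * X i ω ∂μ ≤ 1 / (1 - ε) ^ 2 :=
  stmt7_general μ ε hε0 hε Y X hmeas hindep hval hprob hX p hpnn hpsum hadapted
end

section
/- Let X_1,...,X_n be (possibly dependent) nonnegative random variables with finite expectations, linearly correlated as X = A·Y for a nonnegative matrix A with column sparsity s_col (each feature Y_j appears with nonzero coefficient in at most s_col of the X_i) and independent nonnegative Y_1,...,Y_m. Include each index i ∈ [n] in a random set S independently with probability 1/s_col; for i ∈ S let T_i = {j : A_{ij} > 0 and A_{i'j} = 0 for all i' ∈ S with i' < i} and Z_i = Σ_{j∈T_i} A_{ij} Y_j (with Z_i = 0 for i ∉ S). Then E[max_i Z_i] ≥ (1/(e·s_col))·E[max_i X_i], where the outer expectation is over both S and Y. -/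
open MeasureTheory ProbabilityTheory Finset
open scoped Classical

/-!
Let `i*` be the first row maximising `X_i = ∑ j, A i j * Y j`; it is a function of `Y` alone.
Then `max_i Z_i ≥ Z_{i*} = ∑ j, A i* j * Y j * 1[j is assigned to i*]`, and since the survival
pattern is independent of `Y`, taking expectations splits every summand into
`E[A i j * Y j * 1[i* = i]] * P(j is assigned to i)`. For `A i j ≠ 0` that probability is
`p (1 - p)^c`, where `p = 1/s` and `c ≤ s - 1` counts the earlier rows containing `j`,
and `p (1 - p)^(s-1) ≥ 1/(e s)`. Summing back gives `E[max Z] ≥ E[X_{i*}]/(e s) = E[max X]/(e s)`.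
-/

lemma Real.exp_neg_one_le_one_sub_one_div_pow (k : ℕ) :
    Real.exp (-1) ≤ (1 - 1 / (k + 1 : ℝ)) ^ k := by
  rcases Nat.eq_zero_or_pos k with rfl | hk
  · simp [Real.exp_le_one_iff]
  have hk' : (0 : ℝ) < k := by exact_mod_cast hk
  have hbase : Real.exp (-(1 / k)) ≤ 1 - 1 / (k + 1 : ℝ) := by
    rw [Real.exp_neg, inv_le_comm₀ (Real.exp_pos _)
      (by rw [sub_pos, div_lt_one (by positivity)]; linarith)]
    calc (1 - 1 / (k + 1 : ℝ))⁻¹ = 1 / k + 1 := by field_simp [hk'.ne']; ring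
      _ ≤ Real.exp (1 / k) := Real.add_one_le_exp _
  calc Real.exp (-1) = Real.exp (-(1 / k)) ^ k := by
        rw [← Real.exp_nat_mul]; field_simp
    _ ≤ _ := pow_le_pow_left₀ (Real.exp_nonneg _) hbase k

lemma one_div_exp_mul_le_mul_one_sub_pow {s c : ℕ} (hs : 1 ≤ s) (hc : c ≤ s - 1) :
    1 / (Real.exp 1 * s) ≤ 1 / s * (1 - 1 / s : ℝ) ^ c := by
  obtain ⟨k, rfl⟩ := Nat.exists_eq_add_of_le' hs
  push_cast
  have hq : (0 : ℝ) ≤ 1 - 1 / (k + 1) := by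
    rw [sub_nonneg, div_le_one (by positivity)]; linarith [k.cast_nonneg (α := ℝ)]
  calc 1 / (Real.exp 1 * (k + 1)) = 1 / (k + 1) * Real.exp (-1) := by
        rw [Real.exp_neg]; field_simp
    _ ≤ 1 / (k + 1) * (1 - 1 / (k + 1)) ^ k := by
        gcongr; exact Real.exp_neg_one_le_one_sub_one_div_pow k
    _ ≤ 1 / (k + 1) * (1 - 1 / (k + 1)) ^ c :=
        mul_le_mul_of_nonneg_left (pow_le_pow_of_le_one hq (by simp; positivity) (by omega))
          (by positivity)

namespace Finset

lemma sum_prod_ite_fst_eq {ι κ M : Type*} [Fintype ι] [Fintype κ] [DecidableEq ι]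
    [AddCommMonoid M] (i₀ : ι) (g : ι → κ → M) :
    ∑ k : ι × κ, (if i₀ = k.1 then g k.1 k.2 else 0) = ∑ j, g i₀ j := by
  simp [Fintype.sum_prod_type]

lemma nonempty_filter_eq_sup' {ι : Type*} {s : Finset ι} (hs : s.Nonempty) (f : ι → ℝ) :
    (s.filter fun i => f i = s.sup' hs f).Nonempty :=
  let ⟨i, hi, hfi⟩ := exists_mem_eq_sup' hs f
  ⟨i, mem_filter.2 ⟨hi, hfi.symm⟩⟩

variable {ι α : Type*} [Fintype ι] [LinearOrder ι] [Nonempty ι]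

noncomputable def firstArgmax (f : ι → α → ℝ) (a : α) : ι :=
  (univ.filter fun i => f i a = univ.sup' univ_nonempty (f · a)).min'
    (nonempty_filter_eq_sup' univ_nonempty (f · a))

lemma apply_firstArgmax (f : ι → α → ℝ) (a : α) :
    f (firstArgmax f a) a = univ.sup' univ_nonempty (f · a) :=
  (mem_filter.1 (min'_mem _ (nonempty_filter_eq_sup' univ_nonempty (f · a)))).2

lemma measurableSet_firstArgmax_eq [MeasurableSpace α] {f : ι → α → ℝ}
    (hf : ∀ i, Measurable (f i)) (i : ι) : MeasurableSet {a | firstArgmax f a = i} := by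
  have hsup : Measurable fun a => univ.sup' univ_nonempty (f · a) := by
    convert measurable_sup' univ_nonempty fun i _ => hf i using 1
    ext a
    exact (Finset.sup'_apply _ _ _).symm
  have hpre : {a | firstArgmax f a = i} = {a | f i a = univ.sup' univ_nonempty (f · a)} ∩
      ⋂ i' ∈ Set.Iio i, {a | f i' a = univ.sup' univ_nonempty (f · a)}ᶜ := by
    ext a
    simp only [firstArgmax, min'_eq_iff, mem_filter, mem_univ, true_and, Set.mem_inter_iff,
      Set.mem_ofPred_eq, Set.mem_iInter, Set.mem_Iio, Set.mem_compl_iff]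
    exact and_congr_right fun _ => forall_congr' fun b => by rw [← not_imp_not, not_le]
  rw [hpre]
  exact (measurableSet_eq_fun (hf i) hsup).inter <| MeasurableSet.biInter (Set.to_countable _)
    fun i' _ => (measurableSet_eq_fun (hf i') hsup).compl

end Finset

section

variable {Ω : Type*} [MeasurableSpace Ω] {μ : Measure Ω}

lemma MeasureTheory.integrable_finset_sup' {ι : Type*} {s : Finset ι} (hs : s.Nonempty)
    {f : ι → Ω → ℝ} (hf : ∀ i ∈ s, Integrable (f i) μ) :
    Integrable (fun ω => s.sup' hs (f · ω)) μ := by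
  convert sup'_induction hs f (p := (Integrable · μ)) (fun _ h₁ _ h₂ => h₁.sup h₂) hf using 1
  ext ω
  exact (Finset.sup'_apply _ _ _).symm

namespace ProbabilityTheory

lemma iIndepFun.measureReal_true_and_forall_false {ι : Type*} [IsProbabilityMeasure μ]
    {B : ι → Ω → Bool} (hB : iIndepFun B μ) (hBmeas : ∀ i, Measurable (B i)) {p : ℝ}
    (hp : ∀ i, μ.real {ω | B i ω = true} = p) {i : ι} {F : Finset ι} (hi : i ∉ F) :
    μ.real {ω | B i ω = true ∧ ∀ i' ∈ F, B i' ω = false} = p * (1 - p) ^ #F := by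
  have hfalse : ∀ i', μ.real {ω | B i' ω = false} = 1 - p := fun i' => by
    have hm : MeasurableSet {ω | B i' ω = true} := hBmeas i' (measurableSet_singleton true)
    rw [← hp i', ← probReal_compl_eq_one_sub hm]
    congr 1; ext ω; simp
  have hset : {ω | B i ω = true ∧ ∀ i' ∈ F, B i' ω = false}
      = ⋂ k ∈ insert i F, B k ⁻¹' {if k = i then true else false} := by
    ext ω
    simp only [Set.mem_ofPred_eq, Set.mem_iInter, Finset.mem_insert, Set.mem_preimage,
      Set.mem_singleton_iff]
    constructor
    · rintro ⟨hi', hF⟩ k (rfl | hk)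
      · simpa using hi'
      · simpa [ne_of_mem_of_not_mem hk hi] using hF k hk
    · intro h
      refine ⟨by simpa using h i (Or.inl rfl), fun i' hi' => ?_⟩
      simpa [ne_of_mem_of_not_mem hi' hi] using h i' (Or.inr hi')
  have hprod : ∏ i' ∈ F, (μ (B i' ⁻¹' {if i' = i then true else false})).toReal
      = ∏ _i' ∈ F, (1 - p) := prod_congr rfl fun i' hi' => by
    rw [if_neg (ne_of_mem_of_not_mem hi' hi), ← measureReal_def]
    exact hfalse i'
  rw [hset, measureReal_def, hB.measure_inter_preimage_eq_mul _ (fun _ _ => trivial),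
    ENNReal.toReal_prod, prod_insert hi, if_pos rfl, ← measureReal_def, hprod, prod_const]
  exact congrArg (· * _) (hp i)

section SumIndexed

universe u

variable {ι κ : Type*} {β γ : Type u} [mβ : MeasurableSpace β] [mγ : MeasurableSpace γ]
  {f : ι → Ω → β} {g : κ → Ω → γ}

lemma iIndepFun.of_sumRec_left
    (h : iIndepFun (m := fun k : ι ⊕ κ => Sum.rec (fun _ => mβ) (fun _ => mγ) k)
      (fun k => Sum.rec (motive := fun k => Ω → Sum.elim (fun _ => β) (fun _ => γ) k) f g k) μ) :
    iIndepFun f μ :=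
  (h.precomp (g := Sum.inl) Sum.inl_injective :)

lemma iIndepFun.indepFun_of_sumRec [Fintype ι] [Fintype κ]
    (h : iIndepFun (m := fun k : ι ⊕ κ => Sum.rec (fun _ => mβ) (fun _ => mγ) k)
      (fun k => Sum.rec (motive := fun k => Ω → Sum.elim (fun _ => β) (fun _ => γ) k) f g k) μ)
    (hf : ∀ i, Measurable (f i)) (hg : ∀ j, Measurable (g j)) :
    IndepFun (fun ω i => f i ω) (fun ω j => g j ω) μ := by
  let : ∀ k : ι ⊕ κ, MeasurableSpace (Sum.elim (fun _ => β) (fun _ => γ) k) :=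
    fun k => Sum.rec (fun _ => mβ) (fun _ => mγ) k
  have hST := h.indepFun_finset (univ.map .inl) (univ.map .inr)
    (by simp [disjoint_left]) fun | .inl i => hf i | .inr j => hg j
  exact hST.comp (φ := fun v i => v ⟨.inl i, by simp⟩) (ψ := fun v j => v ⟨.inr j, by simp⟩)
    (measurable_pi_lambda _ fun _ => measurable_pi_apply _)
    (measurable_pi_lambda _ fun _ => measurable_pi_apply _)

end SumIndexed

lemma mul_integral_sum_le_integral_sum_mul {K : Type*} [Fintype K] {a : K → ℝ}
    (ha : ∀ k, 0 ≤ a k) {U V : K → Ω → ℝ} (hU : ∀ k, Integrable (U k) μ)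
    (hUnn : ∀ k ω, 0 ≤ U k ω) (hV : ∀ k, Integrable (V k) μ) (hUV : ∀ k, IndepFun (U k) (V k) μ)
    {c : ℝ} (hc : ∀ k, a k ≠ 0 → c ≤ ∫ ω, V k ω ∂μ) :
    c * ∫ ω, ∑ k, a k * U k ω ∂μ ≤ ∫ ω, ∑ k, a k * (U k ω * V k ω) ∂μ := by
  have hUV_int : ∀ k, Integrable (fun ω => a k * (U k ω * V k ω)) μ :=
    fun k => ((hUV k).integrable_mul (hU k) (hV k)).const_mul _
  rw [integral_finsetSum _ fun k _ => (hU k).const_mul _,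
    integral_finsetSum _ fun k _ => hUV_int k, mul_sum]
  refine sum_le_sum fun k _ => ?_
  rw [integral_const_mul, integral_const_mul,
    (hUV k).integral_fun_mul_eq_mul_integral (hU k).1 (hV k).1]
  rcases eq_or_ne (a k) 0 with hak | hak
  · simp [hak]
  · have hEU : 0 ≤ ∫ ω, U k ω ∂μ := integral_nonneg (hUnn k)
    calc c * (a k * ∫ ω, U k ω ∂μ) = a k * ((∫ ω, U k ω ∂μ) * c) := by ring
      _ ≤ _ := by gcongr; exacts [ha k, hc k hak]

end ProbabilityTheory

section Subsampling

variable {ι κ : Type*} (A : ι → κ → ℝ)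

/-- With `S = {i | b i = true}`, the paper's `j ∈ T_i` reads `IsAssigned A b i j ∧ A i j ≠ 0`. -/
def IsAssigned [LT ι] (b : ι → Bool) (i : ι) (j : κ) : Prop :=
  b i = true ∧ ∀ i' < i, b i' = true → A i' j = 0

lemma ite_sum_filter_eq_sum_ite_isAssigned [LT ι] [Fintype κ] (b : ι → Bool) (y : κ → ℝ)
    (i : ι) :
    (if b i = true then
        ∑ j ∈ univ.filter (fun j => A i j ≠ 0 ∧ ∀ i', i' < i → b i' = true → A i' j = 0),
          A i j * y j
      else 0) = ∑ j, if IsAssigned A b i j then A i j * y j else 0 := by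
  rw [sum_filter]
  split_ifs with hbi
  · refine sum_congr rfl fun j _ => ?_
    by_cases hA : A i j = 0 <;> simp [IsAssigned, hA, hbi]
  · simp [IsAssigned, hbi]

lemma integrable_sum_ite_isAssigned [LT ι] [Finite ι] [Fintype κ]
    {b : Ω → ι → Bool} (hb : Measurable b) {y : Ω → κ → ℝ}
    (hy : ∀ j, Integrable (fun ω => y ω j) μ) (i : ι) :
    Integrable (fun ω => ∑ j, if IsAssigned A (b ω) i j then A i j * y ω j else 0) μ :=
  integrable_finsetSum _ fun j _ =>
    ((hy j).const_mul (A i j)).indicator (hb (.of_discrete (s := {b' | IsAssigned A b' i j})))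

lemma le_measureReal_isAssigned [Fintype ι] [LinearOrder ι] [IsProbabilityMeasure μ]
    {B : ι → Ω → Bool} (hB : iIndepFun B μ) (hBmeas : ∀ i, Measurable (B i)) {s : ℕ}
    (hs : 1 ≤ s) (hBprob : ∀ i, μ.real {ω | B i ω = true} = 1 / s) {i : ι} {j : κ}
    (hcol : #(univ.filter fun i => A i j ≠ 0) ≤ s) (hij : A i j ≠ 0) :
    1 / (Real.exp 1 * s) ≤ μ.real {ω | IsAssigned A (fun i => B i ω) i j} := by
  set F := univ.filter fun i' => i' < i ∧ A i' j ≠ 0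
  have hF : #F ≤ s - 1 := by
    have hsub : F ⊆ (univ.filter fun i => A i j ≠ 0).erase i := fun i' hi' => by
      simp only [F, mem_filter, mem_univ, true_and] at hi'
      simp [hi'.1.ne, hi'.2]
    have := card_le_card hsub
    rw [card_erase_of_mem (by simp [hij])] at this
    omega
  have hset : {ω | IsAssigned A (fun i => B i ω) i j}
      = {ω | B i ω = true ∧ ∀ i' ∈ F, B i' ω = false} := by
    ext ω
    simp only [IsAssigned, Set.mem_ofPred_eq, F, mem_filter, mem_univ, true_and, and_imp]
    refine and_congr_right fun _ => forall_congr' fun i' => forall_congr' fun hi' => ?_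
    cases B i' ω <;> simp
  rw [hset, hB.measureReal_true_and_forall_false hBmeas hBprob (by simp [F])]
  exact one_div_exp_mul_le_mul_one_sub_pow hs hF

variable [Fintype ι] [LinearOrder ι] [Nonempty ι] [Fintype κ]

noncomputable def argmaxCoord (k : ι × κ) (y : κ → ℝ) : ℝ :=
  if firstArgmax (fun i y => ∑ j, A i j * y j) y = k.1 then y k.2 else 0

lemma measurable_argmaxCoord (k : ι × κ) : Measurable (argmaxCoord A k) :=
  Measurable.ite (measurableSet_firstArgmax_eq (fun i => by fun_prop) k.1)
    (measurable_pi_apply _) measurable_const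

lemma argmaxCoord_nonneg {y : κ → ℝ} (hy : ∀ j, 0 ≤ y j) (k : ι × κ) :
    0 ≤ argmaxCoord A k y := by
  unfold argmaxCoord; split_ifs <;> simp [hy]

lemma integrable_argmaxCoord {y : Ω → κ → ℝ} (hy : Measurable y)
    (hyint : ∀ j, Integrable (fun ω => y ω j) μ) (k : ι × κ) :
    Integrable (fun ω => argmaxCoord A k (y ω)) μ :=
  (hyint k.2).mono ((measurable_argmaxCoord A k).comp hy).aestronglyMeasurable <|
    ae_of_all _ fun ω => by unfold argmaxCoord; split_ifs <;> simp

lemma sup'_eq_sum_mul_argmaxCoord (y : κ → ℝ) :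
    univ.sup' univ_nonempty (fun i => ∑ j, A i j * y j) = ∑ k, A k.1 k.2 * argmaxCoord A k y := by
  rw [← apply_firstArgmax (fun i y => ∑ j, A i j * y j) y]
  refine (sum_prod_ite_fst_eq _ fun i j => A i j * y j).symm.trans (sum_congr rfl fun k _ => ?_)
  simp only [argmaxCoord, mul_ite, mul_zero]

lemma sum_mul_argmaxCoord_mul_le_sup' (b : ι → Bool) (y : κ → ℝ) :
    ∑ k, A k.1 k.2 * (argmaxCoord A k y * {b' | IsAssigned A b' k.1 k.2}.indicator 1 b)
      ≤ univ.sup' univ_nonempty fun i => ∑ j, if IsAssigned A b i j then A i j * y j else 0 := by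
  set i₀ := firstArgmax (fun i y => ∑ j, A i j * y j) y
  calc _ = ∑ k : ι × κ, if i₀ = k.1 then
          (if IsAssigned A b k.1 k.2 then A k.1 k.2 * y k.2 else 0) else 0 :=
        sum_congr rfl fun k _ => by
          simp only [argmaxCoord, Set.indicator_apply, Set.mem_ofPred_eq]
          split_ifs <;> simp_all
    _ = ∑ j, if IsAssigned A b i₀ j then A i₀ j * y j else 0 :=
        sum_prod_ite_fst_eq i₀ fun i j => if IsAssigned A b i j then A i j * y j else 0
    _ ≤ _ := le_sup' (fun i => ∑ j, if IsAssigned A b i j then A i j * y j else 0) (mem_univ i₀)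

theorem mul_integral_sup_le_integral_sup_isAssigned [IsProbabilityMeasure μ]
    (hA : ∀ i j, 0 ≤ A i j) {s : ℕ} (hs : 1 ≤ s)
    (hcol : ∀ j, #(univ.filter fun i => A i j ≠ 0) ≤ s)
    {Y : κ → Ω → ℝ} (hYmeas : ∀ j, Measurable (Y j)) (hYnn : ∀ j ω, 0 ≤ Y j ω)
    (hYint : ∀ j, Integrable (Y j) μ)
    {B : ι → Ω → Bool} (hBmeas : ∀ i, Measurable (B i))
    (hBprob : ∀ i, μ.real {ω | B i ω = true} = 1 / s) (hB : iIndepFun B μ)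
    (hBY : IndepFun (fun ω i => B i ω) (fun ω j => Y j ω) μ) :
    1 / (Real.exp 1 * s) * ∫ ω, univ.sup' univ_nonempty (fun i => ∑ j, A i j * Y j ω) ∂μ
      ≤ ∫ ω, univ.sup' univ_nonempty
          (fun i => ∑ j, if IsAssigned A (fun i => B i ω) i j then A i j * Y j ω else 0) ∂μ := by
  set b : Ω → ι → Bool := fun ω i => B i ω
  set y : Ω → κ → ℝ := fun ω j => Y j ω
  have hb : Measurable b := measurable_pi_lambda _ hBmeas
  set U := fun k ω => argmaxCoord A k (y ω)
  set V := fun k : ι × κ => {ω | IsAssigned A (b ω) k.1 k.2}.indicator (1 : Ω → ℝ)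
  have hU : ∀ k, Integrable (U k) μ :=
    integrable_argmaxCoord A (measurable_pi_lambda _ hYmeas) hYint
  have hV : ∀ k, Integrable (V k) μ := fun k =>
    (integrable_const 1).indicator (hb (.of_discrete (s := {b' | IsAssigned A b' k.1 k.2})))
  have hUV : ∀ k, IndepFun (U k) (V k) μ := fun k =>
    hBY.symm.comp (measurable_argmaxCoord A k)
      (measurable_of_countable ({b' | IsAssigned A b' k.1 k.2}.indicator 1))
  calc 1 / (Real.exp 1 * s) * ∫ ω, univ.sup' univ_nonempty (fun i => ∑ j, A i j * Y j ω) ∂μ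
      = 1 / (Real.exp 1 * s) * ∫ ω, ∑ k, A k.1 k.2 * U k ω ∂μ := by
        simp_rw [sup'_eq_sum_mul_argmaxCoord]
        rfl
    _ ≤ ∫ ω, ∑ k, A k.1 k.2 * (U k ω * V k ω) ∂μ :=
      mul_integral_sum_le_integral_sum_mul (fun k => hA _ _) hU
        (fun k ω => argmaxCoord_nonneg A (hYnn · ω) k) hV hUV fun k hk =>
          (le_measureReal_isAssigned A hB hBmeas hs hBprob (hcol _) hk).trans_eq
            (integral_indicator_one (hb (.of_discrete (s := {b' | IsAssigned A b' k.1 k.2})))).symm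
    _ ≤ _ :=
      integral_mono
        (integrable_finsetSum _ fun k _ => ((hUV k).integrable_mul (hU k) (hV k)).const_mul _)
        (integrable_finset_sup' _ fun i _ => integrable_sum_ite_isAssigned A hb hYint i)
        fun ω => sum_mul_argmaxCoord_mul_le_sup' A (b ω) (y ω)

end Subsampling

end

/-- Subsampling claim for bounded column sparsity: include each row `i` independently with
probability `1/s_col` (indicators `B i`, jointly independent of the features `Y`), assign
each feature to the first surviving row containing it, and let `Z_i` be the resulting sum.
Then `E[max_i Z_i] ≥ E[max_i X_i]/(e·s_col)`. -/
theorem stmt9 {Ω : Type*} [MeasurableSpace Ω] (μ : Measure Ω) [IsProbabilityMeasure μ]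
    {n m : ℕ} (scol : ℕ) (hscol : 1 ≤ scol)
    (A : Fin (n + 1) → Fin m → ℝ) (hA : ∀ i j, 0 ≤ A i j)
    (hcol : ∀ j, (Finset.univ.filter (fun i => A i j ≠ 0)).card ≤ scol)
    (Y : Fin m → Ω → ℝ) (hYmeas : ∀ j, Measurable (Y j)) (hYnn : ∀ j ω, 0 ≤ Y j ω)
    (hYint : ∀ j, Integrable (Y j) μ)
    (B : Fin (n + 1) → Ω → Bool) (hBmeas : ∀ i, Measurable (B i))
    (hBprob : ∀ i, (μ {ω | B i ω = true}).toReal = 1 / scol)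
    (hindep : iIndepFun
      (m := fun k : Fin (n + 1) ⊕ Fin m => Sum.rec
        (fun _ => (inferInstance : MeasurableSpace Bool))
        (fun _ => (inferInstance : MeasurableSpace ℝ)) k)
      (fun k => Sum.rec
        (motive := fun k => Ω → Sum.elim (fun _ => Bool) (fun _ => ℝ) k) B Y k) μ)
    (X Z : Fin (n + 1) → Ω → ℝ)
    (hX : ∀ i ω, X i ω = ∑ j, A i j * Y j ω)
    (hZ : ∀ i ω, Z i ω =
      if B i ω = true then
        ∑ j ∈ Finset.univ.filter (fun j =>
            A i j ≠ 0 ∧ ∀ i' : Fin (n + 1), i' < i → B i' ω = true → A i' j = 0),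
          A i j * Y j ω
      else 0) :
    (1 / (Real.exp 1 * scol)) * ∫ ω, Finset.univ.sup' Finset.univ_nonempty (fun i => X i ω) ∂μ
      ≤ ∫ ω, Finset.univ.sup' Finset.univ_nonempty (fun i => Z i ω) ∂μ := by
  have hZ' : ∀ i ω, Z i ω =
      ∑ j, if IsAssigned A (fun i => B i ω) i j then A i j * Y j ω else 0 := fun i ω => by
    rw [hZ]
    -- the two filters differ only in their `Decidable` instances
    convert ite_sum_filter_eq_sum_ite_isAssigned A (fun i => B i ω) (Y · ω) i
  simp only [hX, hZ']
  exact mul_integral_sup_le_integral_sup_isAssigned A hA hscol hcol hYmeas hYnn hYint hBmeas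
    hBprob hindep.of_sumRec_left (hindep.indepFun_of_sumRec hBmeas hYmeas)
end

section
/- Let X_1,...,X_n be exchangeable-in-expectation nonnegative random variables (arbitrary joint distribution), let r ≤ n, and place each index independently and uniformly into one of r buckets B_1,...,B_r. Let X^{(1)} ≥ X^{(2)} ≥ ... denote the order statistics. Then r·E[max_{i ∈ B_1} X_i] ≥ (1/e)·E[Σ_{i=1}^r X^{(i)}]. -/
open MeasureTheory ProbabilityTheory Finset
open scoped Classical

/-- Maximum of `X i ω` over the indices landing in bucket `b` (0 if the bucket is empty). -/
noncomputable def bucketMax {Ω Ω' : Type*} {n r : ℕ} (X : Fin n → Ω → ℝ)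
    (G : Fin n → Ω' → Fin r) (b : Fin r) (ω : Ω) (ω' : Ω') : ℝ :=
  if h : (Finset.univ.filter (fun i => G i ω' = b)).Nonempty then
    (Finset.univ.filter (fun i => G i ω' = b)).sup' h (fun i => X i ω)
  else 0

/-!
Fix `ω` and scan the indices in the order `K ω 0, K ω 1, …`. Let `Aᵢ` be the event that `K ω i`
is the first of them that the bucketing puts into bucket `0`. The events `Aᵢ` are disjoint, on
`Aᵢ` the bucket maximum is at least `X (K ω i) ω`, and by independence
`μ' Aᵢ = r⁻¹ (1 - r⁻¹)^i ≥ (e r)⁻¹` for `i < r`, because `(1 - r⁻¹)^(r-1) ≥ e⁻¹`. Hence the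
expected bucket maximum dominates `(e r)⁻¹ ∑_{i<r} X (K ω i) ω` for every `ω`, and Fubini
finishes the proof.
-/

lemma inv_exp_one_le_one_sub_inv_pow {i r : ℕ} (hi : i < r) :
    (Real.exp 1)⁻¹ ≤ (1 - (r : ℝ)⁻¹) ^ i := by
  obtain ⟨m, rfl⟩ : ∃ m, r = m + 1 := ⟨r - 1, by omega⟩
  rcases Nat.eq_zero_or_pos m with rfl | hm
  · obtain rfl : i = 0 := by omega
    simpa using inv_le_one_of_one_le₀ (Real.one_le_exp zero_le_one)
  have hbase : 1 - ((m + 1 : ℕ) : ℝ)⁻¹ = (1 + (m : ℝ)⁻¹)⁻¹ := by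
    have : (0 : ℝ) < m := by exact_mod_cast hm
    push_cast; field_simp; ring
  calc (Real.exp 1)⁻¹ ≤ ((1 + (m : ℝ)⁻¹) ^ m)⁻¹ :=
        inv_anti₀ (by positivity) Real.one_add_inv_pow_le_exp
    _ = (1 - ((m + 1 : ℕ) : ℝ)⁻¹) ^ m := by rw [hbase, inv_pow]
    _ ≤ (1 - ((m + 1 : ℕ) : ℝ)⁻¹) ^ i := by
        rw [hbase]
        exact pow_le_pow_of_le_one (by positivity) (inv_le_one_of_one_le₀ (by simp)) (by omega)

lemma ProbabilityTheory.iIndepFun.measure_setOf_eq_inter_biInter_ne {Ω ι β : Type*}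
    [MeasurableSpace Ω] [MeasurableSpace β] [MeasurableSingletonClass β] {μ : Measure Ω}
    [IsProbabilityMeasure μ]
    {G : ι → Ω → β} (hG : iIndepFun G μ) (hGm : ∀ i, Measurable (G i)) {b : β} {p : ENNReal}
    (hp : ∀ i, μ {ω | G i ω = b} = p) {k : ι} {s : Finset ι} (hk : k ∉ s) :
    μ ({ω | G k ω = b} ∩ ⋂ j ∈ s, {ω | G j ω ≠ b}) = p * (1 - p) ^ #s := by
  set S : ι → Set β := Function.update (fun _ => {b}ᶜ) k {b}
  have hS_of_mem : ∀ j ∈ s, S j = {b}ᶜ := fun j hj =>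
    Function.update_of_ne (ne_of_mem_of_not_mem hj hk) _ _
  have hS_self : S k = {b} := Function.update_self _ _ _
  have hset : {ω | G k ω = b} ∩ ⋂ j ∈ s, {ω | G j ω ≠ b} = ⋂ j ∈ insert k s, G j ⁻¹' S j := by
    rw [set_biInter_insert, hS_self]
    congr 1
    exact Set.iInter₂_congr fun j hj => by rw [hS_of_mem j hj]; rfl
  have hmiss : ∀ j, μ (G j ⁻¹' {b}ᶜ) = 1 - p := fun j => by
    rw [Set.preimage_compl, prob_compl_eq_one_sub ((hGm j) (measurableSet_singleton b)), ← hp j]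
    rfl
  rw [hset, hG.measure_inter_preimage_eq_mul _ fun j hj => ?_, prod_insert hk,
    prod_congr rfl fun j hj => by rw [hS_of_mem j hj, hmiss], prod_const, hS_self]
  · exact congrArg (· * _) (hp k)
  · rcases mem_insert.1 hj with rfl | hj
    · rw [hS_self]; exact measurableSet_singleton b
    · rw [hS_of_mem j hj]; exact (measurableSet_singleton b).compl

section BucketMax

variable {Ω Ω' : Type*} {n r : ℕ} {X : Fin n → Ω → ℝ} {G : Fin n → Ω' → Fin r} {b : Fin r}

lemma le_bucketMax {i : Fin n} {ω : Ω} {ω' : Ω'} (hi : G i ω' = b) :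
    X i ω ≤ bucketMax X G b ω ω' := by
  have hmem : i ∈ univ.filter (fun j => G j ω' = b) := by simp [hi]
  rw [bucketMax, dif_pos ⟨i, hmem⟩]
  exact le_sup' (fun j => X j ω) hmem

lemma bucketMax_nonneg {ω : Ω} (hX : ∀ i, 0 ≤ X i ω) (ω' : Ω') : 0 ≤ bucketMax X G b ω ω' := by
  unfold bucketMax
  split_ifs with h
  · obtain ⟨i, hi⟩ := h
    exact le_sup'_of_le _ hi (hX i)
  · exact le_rfl

lemma bucketMax_le_sum {ω : Ω} (hX : ∀ i, 0 ≤ X i ω) (ω' : Ω') :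
    bucketMax X G b ω ω' ≤ ∑ i, X i ω := by
  unfold bucketMax
  split_ifs
  · exact sup'_le _ _ fun i _ => single_le_sum (fun j _ => hX j) (mem_univ i)
  · exact sum_nonneg fun i _ => hX i

def firstInBucket (G : Fin n → Ω' → Fin r) (σ : Fin n → Fin n) (b : Fin r) (i : Fin n) :
    Set Ω' :=
  {ω' | G (σ i) ω' = b} ∩ ⋂ j ∈ Iio i, {ω' | G (σ j) ω' ≠ b}

lemma pairwise_disjoint_firstInBucket (σ : Fin n → Fin n) :
    Pairwise (Function.onFun Disjoint (firstInBucket G σ b)) := by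
  suffices h : ∀ i j, i < j → Disjoint (firstInBucket G σ b i) (firstInBucket G σ b j) from
    fun i j hij => hij.lt_or_gt.elim (h i j) fun hji => (h j i hji).symm
  intro i j hij
  refine Set.disjoint_left.2 fun ω' hi hj => ?_
  simp only [firstInBucket, Set.mem_inter_iff, Set.mem_iInter] at hi hj
  exact hj.2 i (mem_Iio.2 hij) hi.1

lemma sum_indicator_firstInBucket_le_bucketMax {ω : Ω} (hX : ∀ i, 0 ≤ X i ω)
    (σ : Fin n → Fin n) (s : Finset (Fin n)) (ω' : Ω') :
    ∑ i ∈ s, (firstInBucket G σ b i).indicator (fun _ => X (σ i) ω) ω' ≤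
      bucketMax X G b ω ω' :=
  calc ∑ i ∈ s, (firstInBucket G σ b i).indicator (fun _ => X (σ i) ω) ω'
      ≤ ∑ i ∈ s, (firstInBucket G σ b i).indicator (bucketMax X G b ω) ω' :=
        sum_le_sum fun _ _ => Set.indicator_le_indicator' fun h => le_bucketMax h.1
    _ = (⋃ i ∈ s, firstInBucket G σ b i).indicator (bucketMax X G b ω) ω' :=
        (indicator_biUnion_apply s _ ((pairwise_disjoint_firstInBucket σ).set_pairwise _) ω').symm
    _ ≤ bucketMax X G b ω ω' := Set.indicator_le_self' (fun _ _ => bucketMax_nonneg hX _) ω'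

variable [MeasurableSpace Ω']

lemma measurableSet_firstInBucket (hG : ∀ i, Measurable (G i)) (σ : Fin n → Fin n) (i : Fin n) :
    MeasurableSet (firstInBucket G σ b i) :=
  ((hG _) (measurableSet_singleton b)).inter <|
    .biInter (Iio i).countable_toSet fun _ _ => ((hG _) (measurableSet_singleton b)).compl

lemma measure_firstInBucket {μ' : Measure Ω'} [IsProbabilityMeasure μ'] (hGi : iIndepFun G μ')
    (hG : ∀ i, Measurable (G i)) {p : ENNReal} (hp : ∀ i, μ' {ω' | G i ω' = b} = p)
    {σ : Fin n → Fin n} (hσ : σ.Injective) (i : Fin n) :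
    μ' (firstInBucket G σ b i) = p * (1 - p) ^ (i : ℕ) := by
  have hi : σ i ∉ (Iio i).image σ := by simp [hσ.eq_iff]
  have himage : ⋂ j ∈ Iio i, {ω' | G (σ j) ω' ≠ b} = ⋂ j ∈ (Iio i).image σ, {ω' | G j ω' ≠ b} :=
    (set_biInter_finset_image (g := fun j => {ω' | G j ω' ≠ b})).symm
  rw [firstInBucket, himage, hGi.measure_setOf_eq_inter_biInter_ne hG hp hi,
    card_image_of_injective _ hσ, Fin.card_Iio]

lemma measurable_bucketMax_right (hG : ∀ i, Measurable (G i)) (ω : Ω) :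
    Measurable fun ω' => bucketMax X G b ω ω' := by
  have h : (fun ω' => bucketMax X G b ω ω') =
      (fun g : Fin n → Fin r => bucketMax X (fun i g => g i) b ω g) ∘ fun ω' i => G i ω' := rfl
  rw [h]
  exact (measurable_of_finite _).comp (measurable_pi_lambda _ hG)

lemma sum_measureReal_firstInBucket_mul_le_integral_bucketMax {μ' : Measure Ω'}
    [IsFiniteMeasure μ'] (hG : ∀ i, Measurable (G i)) {ω : Ω} (hX : ∀ i, 0 ≤ X i ω)
    (σ : Fin n → Fin n) (s : Finset (Fin n)) :
    ∑ i ∈ s, μ'.real (firstInBucket G σ b i) * X (σ i) ω ≤ ∫ ω', bucketMax X G b ω ω' ∂μ' := by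
  have hind : ∀ i ∈ s, Integrable ((firstInBucket G σ b i).indicator fun _ => X (σ i) ω) μ' :=
    fun i _ => (integrable_const _).indicator (measurableSet_firstInBucket hG σ i)
  have hbm : Integrable (fun ω' => bucketMax X G b ω ω') μ' :=
    .of_bound (measurable_bucketMax_right hG ω).aestronglyMeasurable (∑ i, X i ω) <|
      .of_forall fun ω' => by
        rw [Real.norm_of_nonneg (bucketMax_nonneg hX ω')]
        exact bucketMax_le_sum hX ω'
  calc ∑ i ∈ s, μ'.real (firstInBucket G σ b i) * X (σ i) ω
      = ∫ ω', ∑ i ∈ s, (firstInBucket G σ b i).indicator (fun _ => X (σ i) ω) ω' ∂μ' := by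
        rw [integral_finsetSum _ hind]
        exact sum_congr rfl fun i _ =>
          (integral_indicator_const _ (measurableSet_firstInBucket hG σ i)).symm
    _ ≤ ∫ ω', bucketMax X G b ω ω' ∂μ' :=
        integral_mono (integrable_finsetSum _ hind) hbm
          (sum_indicator_firstInBucket_le_bucketMax hX σ s)

lemma inv_exp_mul_sum_le_integral_bucketMax {μ' : Measure Ω'} [IsProbabilityMeasure μ']
    (hGi : iIndepFun G μ') (hG : ∀ i, Measurable (G i))
    (hunif : ∀ i, μ' {ω' | G i ω' = b} = (r : ENNReal)⁻¹) {σ : Fin n → Fin n}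
    (hσ : σ.Injective) {ω : Ω} (hX : ∀ i, 0 ≤ X i ω) :
    (Real.exp 1 * r)⁻¹ * ∑ i ∈ univ.filter (fun i : Fin n => (i : ℕ) < r), X (σ i) ω ≤
      ∫ ω', bucketMax X G b ω ω' ∂μ' := by
  refine le_trans ?_ (sum_measureReal_firstInBucket_mul_le_integral_bucketMax (μ' := μ') (b := b)
    hG hX σ (univ.filter fun i : Fin n => (i : ℕ) < r))
  rw [mul_sum]
  refine sum_le_sum fun i hi => mul_le_mul_of_nonneg_right ?_ (hX _)
  have hr : (1 : ENNReal) ≤ r := by exact_mod_cast b.pos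
  calc (Real.exp 1 * r)⁻¹ = (r : ℝ)⁻¹ * (Real.exp 1)⁻¹ := by rw [mul_inv, mul_comm]
    _ ≤ (r : ℝ)⁻¹ * (1 - (r : ℝ)⁻¹) ^ (i : ℕ) := by
        gcongr
        exact inv_exp_one_le_one_sub_inv_pow (mem_filter.1 hi).2
    _ = μ'.real (firstInBucket G σ b i) := by
        rw [measureReal_def, measure_firstInBucket hGi hG hunif hσ i,
          ENNReal.toReal_mul, ENNReal.toReal_pow,
          ENNReal.toReal_sub_of_le (ENNReal.inv_le_one.2 hr) ENNReal.one_ne_top]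
        simp

variable [MeasurableSpace Ω]

/- `bucketMax` depends on `ω'` only through the assignment `fun i => G i ω'`, which takes values
in the countable type `Fin n → Fin r`. -/
lemma measurable_bucketMax (hX : ∀ i, Measurable (X i)) (hG : ∀ i, Measurable (G i)) :
    Measurable fun w : Ω × Ω' => bucketMax X G b w.1 w.2 := by
  have h : (fun w : Ω × Ω' => bucketMax X G b w.1 w.2) =
      (fun q : Ω × (Fin n → Fin r) => bucketMax X (fun i g => g i) b q.1 q.2) ∘
        fun w => (w.1, fun i => G i w.2) := rfl
  have hH : Measurable fun q : Ω × (Fin n → Fin r) => bucketMax X (fun i g => g i) b q.1 q.2 :=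
    measurable_from_prod_countable_left fun g => by
      dsimp only [bucketMax]
      split_ifs with h
      · simpa only [← Finset.sup'_apply] using Finset.measurable_sup' h fun i _ => hX i
      · exact measurable_const
  rw [h]
  exact hH.comp (measurable_fst.prodMk (measurable_pi_lambda _ fun i => (hG i).comp measurable_snd))

lemma integrable_bucketMax {μ : Measure Ω} {μ' : Measure Ω'} [SFinite μ] [IsFiniteMeasure μ']
    (hXm : ∀ i, Measurable (X i)) (hXi : ∀ i, Integrable (X i) μ) (hX : ∀ i ω, 0 ≤ X i ω)
    (hG : ∀ i, Measurable (G i)) :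
    Integrable (fun w : Ω × Ω' => bucketMax X G b w.1 w.2) (μ.prod μ') :=
  ((integrable_finsetSum _ fun i _ => hXi i).comp_fst μ').mono'
    (measurable_bucketMax hXm hG).aestronglyMeasurable <| .of_forall fun w => by
      rw [Real.norm_of_nonneg (bucketMax_nonneg (hX · w.1) w.2)]
      exact bucketMax_le_sum (hX · w.1) w.2

end BucketMax

theorem stmt13_general {Ω Ω' : Type*} [MeasurableSpace Ω] [MeasurableSpace Ω']
    (μ : Measure Ω) [IsProbabilityMeasure μ] (μ' : Measure Ω') [IsProbabilityMeasure μ']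
    {n r : ℕ} (hr : 0 < r)
    (X : Fin n → Ω → ℝ) (hmeas : ∀ i, Measurable (X i)) (hnn : ∀ i ω, 0 ≤ X i ω)
    (hint : ∀ i, Integrable (X i) μ)
    (K : Ω → Fin n → Fin n) (hKbij : ∀ ω, Function.Bijective (K ω))
    (G : Fin n → Ω' → Fin r) (hGmeas : ∀ i, Measurable (G i))
    (hGindep : iIndepFun G μ')
    (hGunif : ∀ i b, μ' {ω' | G i ω' = b} = (r : ENNReal)⁻¹) :
    (1 / Real.exp 1) *
        ∫ ω, (∑ i ∈ Finset.univ.filter (fun i : Fin n => (i : ℕ) < r), X (K ω i) ω) ∂μ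
      ≤ r * ∫ w, bucketMax X G ⟨0, hr⟩ w.1 w.2 ∂(μ.prod μ') := by
  have hbm := integrable_bucketMax (μ := μ) (μ' := μ') (b := ⟨0, hr⟩) hmeas hint hnn hGmeas
  have hpointwise : ∀ ω, (Real.exp 1 * r)⁻¹ *
      ∑ i ∈ univ.filter (fun i : Fin n => (i : ℕ) < r), X (K ω i) ω ≤
        ∫ ω', bucketMax X G ⟨0, hr⟩ ω ω' ∂μ' := fun ω =>
    inv_exp_mul_sum_le_integral_bucketMax hGindep hGmeas (hGunif · _) (hKbij ω).injective (hnn · ω)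
  have hr' : (0 : ℝ) < r := by exact_mod_cast hr
  calc _ = r * ∫ ω, (Real.exp 1 * r)⁻¹ *
          ∑ i ∈ univ.filter (fun i : Fin n => (i : ℕ) < r), X (K ω i) ω ∂μ := by
        rw [integral_const_mul]
        field_simp
    _ ≤ r * ∫ ω, ∫ ω', bucketMax X G ⟨0, hr⟩ ω ω' ∂μ' ∂μ := by
        refine mul_le_mul_of_nonneg_left (integral_mono_of_nonneg (.of_forall fun ω => ?_)
          hbm.integral_prod_left (.of_forall hpointwise)) hr'.le
        exact mul_nonneg (by positivity) (sum_nonneg fun i _ => hnn _ _)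
    _ = r * ∫ w, bucketMax X G ⟨0, hr⟩ w.1 w.2 ∂(μ.prod μ') := by rw [integral_prod _ hbm]

/-- Random bucketing bound: if each of `n` nonnegative (arbitrarily correlated) values is
placed independently and uniformly into one of `r ≤ n` buckets, then
`r·E[max over bucket 1] ≥ (1/e)·E[Σ_{i=1}^r X^{(i)}]`, where `X^{(i)}` are the order
statistics (here given by a pointwise sorting bijection `K`). -/
theorem stmt13 {Ω Ω' : Type*} [MeasurableSpace Ω] [MeasurableSpace Ω']
    (μ : Measure Ω) [IsProbabilityMeasure μ] (μ' : Measure Ω') [IsProbabilityMeasure μ']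
    {n r : ℕ} (hr : 0 < r) (hrn : r ≤ n)
    (X : Fin n → Ω → ℝ) (hmeas : ∀ i, Measurable (X i)) (hnn : ∀ i ω, 0 ≤ X i ω)
    (hint : ∀ i, Integrable (X i) μ)
    (K : Ω → Fin n → Fin n) (hKbij : ∀ ω, Function.Bijective (K ω))
    (hKsort : ∀ ω, ∀ i i' : Fin n, i ≤ i' → X (K ω i') ω ≤ X (K ω i) ω)
    (G : Fin n → Ω' → Fin r) (hGmeas : ∀ i, Measurable (G i))
    (hGindep : iIndepFun G μ')
    (hGunif : ∀ i b, μ' {ω' | G i ω' = b} = (r : ENNReal)⁻¹) :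
    (1 / Real.exp 1) *
        ∫ ω, (∑ i ∈ Finset.univ.filter (fun i : Fin n => (i : ℕ) < r), X (K ω i) ω) ∂μ
      ≤ r * ∫ w, bucketMax X G ⟨0, hr⟩ w.1 w.2 ∂(μ.prod μ') :=
  stmt13_general μ μ' hr X hmeas hnn hint K hKbij G hGmeas hGindep hGunif
end

section
/- Let Y_1,...,Y_m be independent nonnegative random variables, let τ > 0 satisfy Π_j Pr[Y_j ≤ τ] = 1/2, and write p_j = Pr[Y_j > τ]. Then E[max_j Y_j] ≥ (1/2)·Σ_j p_j·E[Y_j | Y_j > τ]. -/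
/-!
Let `A j` be the event that `Y j` is the only variable exceeding `τ`. These events are disjoint
and `max_i Y i ≥ Y j` on `A j`, so `E[max_i Y i] ≥ ∑ j, E[Y j; A j]`. By independence,
`E[Y j; A j] = (∏_{i ≠ j} Pr[Y i ≤ τ]) · E[Y j; Y j > τ]`, and dropping the factor
`Pr[Y j ≤ τ] ≤ 1` shows that the product is at least `∏_i Pr[Y i ≤ τ] = 1/2`.
-/

open MeasureTheory ProbabilityTheory Finset Function

namespace MeasureTheory

variable {Ω ι : Type*} [MeasurableSpace Ω] {μ : Measure Ω}

theorem Integrable.finset_sup'_s16 {β : Type*} [NormedAddCommGroup β] [Lattice β] [HasSolidNorm β]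
    [IsOrderedAddMonoid β] {s : Finset ι} (hs : s.Nonempty) {f : ι → Ω → β}
    (hf : ∀ i ∈ s, Integrable (f i) μ) : Integrable (fun ω => s.sup' hs fun i => f i ω) μ := by
  simpa only [← Finset.sup'_apply] using
    Finset.sup'_induction (p := (Integrable · μ)) hs f (fun _ hg _ hh => hg.sup hh) hf

theorem sum_setIntegral_le_integral {s : Finset ι} {A : ι → Set Ω}
    (hA : ∀ i ∈ s, MeasurableSet (A i)) (hdisj : Set.Pairwise (↑s) (Disjoint on A))
    {g : Ω → ℝ} (hg : Integrable g μ) (hg_nn : 0 ≤ᵐ[μ] g) :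
    ∑ i ∈ s, ∫ ω in A i, g ω ∂μ ≤ ∫ ω, g ω ∂μ := by
  rw [← integral_biUnion_finset s hA hdisj fun _ _ => hg.integrableOn]
  exact setIntegral_le_integral hg hg_nn

end MeasureTheory

namespace ProbabilityTheory

section SoleExceedance

variable {Ω ι : Type*} [Fintype ι] [DecidableEq ι]

def soleExceedance (Y : ι → Ω → ℝ) (τ : ℝ) (j : ι) : Set Ω :=
  Y j ⁻¹' Set.Ioi τ ∩ ⋂ i ∈ ({j}ᶜ : Finset ι), Y i ⁻¹' Set.Iic τ

theorem pairwise_disjoint_soleExceedance (Y : ι → Ω → ℝ) (τ : ℝ) :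
    Pairwise (Disjoint on soleExceedance Y τ) := by
  intro j k hjk
  refine Set.disjoint_left.2 fun ω hj hk => ?_
  have hk_le : Y k ω ≤ τ := Set.mem_iInter₂.1 hj.2 k (by simpa using hjk.symm)
  exact hk_le.not_gt hk.1

theorem measurableSet_soleExceedance [MeasurableSpace Ω] {Y : ι → Ω → ℝ}
    (hmeas : ∀ i, Measurable (Y i)) (τ : ℝ) (j : ι) : MeasurableSet (soleExceedance Y τ j) :=
  (hmeas j measurableSet_Ioi).inter
    (Finset.measurableSet_biInter _ fun i _ => hmeas i measurableSet_Iic)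

end SoleExceedance

variable {Ω ι : Type*} [MeasurableSpace Ω] {μ : Measure Ω} {Y : ι → Ω → ℝ}

theorem iIndepFun.setIntegral_preimage_inter_biInter (hY : iIndepFun Y μ)
    (hmeas : ∀ i, Measurable (Y i)) {j : ι} {S : Finset ι} (hj : j ∉ S) {s : Set ℝ}
    (hs : MeasurableSet s) {t : ι → Set ℝ} (ht : ∀ i, MeasurableSet (t i)) :
    ∫ ω in Y j ⁻¹' s ∩ ⋂ i ∈ S, Y i ⁻¹' t i, Y j ω ∂μ
      = (∏ i ∈ S, μ.real (Y i ⁻¹' t i)) * ∫ ω in Y j ⁻¹' s, Y j ω ∂μ := by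
  have hind : Indep (⨆ i ∈ (S : Set ι), MeasurableSpace.comap (Y i) inferInstance)
      (MeasurableSpace.comap (Y j) inferInstance) μ := by
    simpa using indep_iSup_of_disjoint (fun i => (hmeas i).comap_le) hY.iIndep
      (S := S) (T := {j}) (Set.disjoint_singleton_right.2 hj)
  have hle :
      ⨆ i ∈ (S : Set ι), MeasurableSpace.comap (Y i) inferInstance ≤ ‹MeasurableSpace Ω› :=
    iSup₂_le fun i _ => (hmeas i).comap_le
  have hB : MeasurableSet[⨆ i ∈ (S : Set ι), MeasurableSpace.comap (Y i) inferInstance]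
      (⋂ i ∈ S, Y i ⁻¹' t i) :=
    Finset.measurableSet_biInter S fun i hi =>
      le_iSup₂ (f := fun i (_ : i ∈ (S : Set ι)) => MeasurableSpace.comap (Y i) inferInstance)
        i hi _ ⟨t i, ht i, rfl⟩
  have hprod : μ.real (⋂ i ∈ S, Y i ⁻¹' t i) = ∏ i ∈ S, μ.real (Y i ⁻¹' t i) := by
    simp only [measureReal_def, ← ENNReal.toReal_prod]
    rw [hY.meas_biInter fun i _ => ⟨t i, ht i, rfl⟩]
  have hs_indicator : ∀ ν : Measure Ω,
      ∫ ω in Y j ⁻¹' s, Y j ω ∂ν = ∫ ω, s.indicator id (Y j ω) ∂ν :=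
    fun ν => by rw [← integral_indicator ((hmeas j) hs)]; rfl
  rw [← Measure.restrict_restrict ((hmeas j) hs), hs_indicator, hs_indicator,
    hind.setIntegral_eq_mul hle (hmeas j).aemeasurable hB
      (measurable_id.indicator hs).aestronglyMeasurable, hprod]

theorem iIndepFun.prod_mul_setIntegral_le_setIntegral_soleExceedance [Fintype ι]
    [DecidableEq ι] [IsZeroOrProbabilityMeasure μ] (hY : iIndepFun Y μ)
    (hmeas : ∀ i, Measurable (Y i)) (τ : ℝ) {j : ι} (hnn : ∀ ω, 0 ≤ Y j ω) :
    (∏ i, μ.real {ω | Y i ω ≤ τ}) * ∫ ω in {ω | τ < Y j ω}, Y j ω ∂μ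
      ≤ ∫ ω in soleExceedance Y τ j, Y j ω ∂μ := by
  rw [soleExceedance, hY.setIntegral_preimage_inter_biInter hmeas (by simp) measurableSet_Ioi
    fun _ => measurableSet_Iic]
  refine mul_le_mul_of_nonneg_right ?_
    (setIntegral_nonneg (hmeas j measurableSet_Ioi) fun ω _ => hnn ω)
  exact prod_le_prod_of_subset_of_le_one (subset_univ _) (fun _ _ => measureReal_nonneg)
    fun _ _ _ => measureReal_le_one

end ProbabilityTheory

theorem stmt16_general {Ω : Type*} [MeasurableSpace Ω] (μ : Measure Ω) [IsProbabilityMeasure μ]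
    {m : ℕ} (Y : Fin (m + 1) → Ω → ℝ)
    (hYmeas : ∀ j, Measurable (Y j)) (hYnn : ∀ j ω, 0 ≤ Y j ω)
    (hYint : ∀ j, Integrable (Y j) μ)
    (hindep : iIndepFun Y μ)
    (τ : ℝ)
    (hhalf : ∏ j, (μ {ω | Y j ω ≤ τ}).toReal = 1 / 2) :
    (1 / 2) * ∑ j, ∫ ω in {ω | τ < Y j ω}, Y j ω ∂μ
      ≤ ∫ ω, Finset.univ.sup' Finset.univ_nonempty (fun j => Y j ω) ∂μ := by
  set M : Ω → ℝ := fun ω => Finset.univ.sup' Finset.univ_nonempty (fun j => Y j ω)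
  have hM : Integrable M μ := Integrable.finset_sup'_s16 _ fun j _ => hYint j
  have hY_le_M : ∀ j ω, Y j ω ≤ M ω := fun j ω => Finset.le_sup' (fun i => Y i ω) (mem_univ j)
  rw [← hhalf, mul_sum]
  calc ∑ j, (∏ i, μ.real {ω | Y i ω ≤ τ}) * ∫ ω in {ω | τ < Y j ω}, Y j ω ∂μ
      ≤ ∑ j, ∫ ω in soleExceedance Y τ j, Y j ω ∂μ := sum_le_sum fun j _ =>
        hindep.prod_mul_setIntegral_le_setIntegral_soleExceedance hYmeas τ (hYnn j)
    _ ≤ ∑ j, ∫ ω in soleExceedance Y τ j, M ω ∂μ := sum_le_sum fun j _ =>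
        setIntegral_mono (hYint j).integrableOn hM.integrableOn (hY_le_M j)
    _ ≤ ∫ ω, M ω ∂μ := sum_setIntegral_le_integral
        (fun j _ => measurableSet_soleExceedance hYmeas τ j)
        ((pairwise_disjoint_soleExceedance Y τ).set_pairwise _) hM
        (ae_of_all _ fun ω => (hYnn 0 ω).trans (hY_le_M 0 ω))

/-- Tail bound: if `τ > 0` satisfies `Π_j Pr[Y_j ≤ τ] = 1/2`, then
`E[max_j Y_j] ≥ (1/2)·Σ_j Pr[Y_j > τ]·E[Y_j | Y_j > τ]`, the summand being written as
`∫_{Y_j > τ} Y_j dμ` (which equals `p_j·E[Y_j | Y_j > τ]`, interpreted as 0 if `p_j = 0`). -/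
theorem stmt16 {Ω : Type*} [MeasurableSpace Ω] (μ : Measure Ω) [IsProbabilityMeasure μ]
    {m : ℕ} (Y : Fin (m + 1) → Ω → ℝ)
    (hYmeas : ∀ j, Measurable (Y j)) (hYnn : ∀ j ω, 0 ≤ Y j ω)
    (hYint : ∀ j, Integrable (Y j) μ)
    (hindep : iIndepFun Y μ)
    (τ : ℝ) (hτ : 0 < τ)
    (hhalf : ∏ j, (μ {ω | Y j ω ≤ τ}).toReal = 1 / 2) :
    (1 / 2) * ∑ j, ∫ ω in {ω | τ < Y j ω}, Y j ω ∂μ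
      ≤ ∫ ω, Finset.univ.sup' Finset.univ_nonempty (fun j => Y j ω) ∂μ :=
  stmt16_general μ Y hYmeas hYnn hYint hindep τ hhalf
end

section
/- Let Y_1,...,Y_m be independent nonnegative random variables, S_1,...,S_n ⊆ [m], X_i = Σ_{j∈S_i} Y_j, and τ > 0. Let A = {j : Y_j > τ}. Then E[max_i X_i] ≤ E[max_i Σ_{j ∈ S_i, Y_j ≤ τ} Y_j] + Σ_j Pr[Y_j > τ]·E[Y_j | Y_j > τ], and moreover E[max_i Σ_{j ∈ S_i, Y_j ≤ τ} Y_j] ≤ E[max_i X_i | A = ∅]. -/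
open MeasureTheory ProbabilityTheory Finset

lemma measurable_sup'_fun {δ : Type*} [MeasurableSpace δ] {n : ℕ} (f : Fin (n+1) → δ → ℝ)
    (hf : ∀ i, Measurable (f i)) :
    Measurable (fun ω => Finset.univ.sup' Finset.univ_nonempty (fun i => f i ω)) := by
  have h := Finset.measurable_sup' (s := (univ : Finset (Fin (n+1)))) univ_nonempty
    (f := f) (fun i _ => hf i)
  convert h using 1
  ext ω
  exact (Finset.sup'_apply _ _ _).symm

lemma integrable_sup'_fun {Ω : Type*} [MeasurableSpace Ω] {μ : Measure Ω} {n : ℕ}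
    (f : Fin (n+1) → Ω → ℝ) (hf : ∀ i, Measurable (f i)) (hfi : ∀ i, Integrable (f i) μ) :
    Integrable (fun ω => Finset.univ.sup' Finset.univ_nonempty (fun i => f i ω)) μ := by
  have hb : Integrable (fun ω => ∑ i, |f i ω|) μ :=
    integrable_finset_sum _ (fun i _ => (hfi i).abs)
  refine hb.mono' ((measurable_sup'_fun f hf).aestronglyMeasurable) ?_
  refine Filter.Eventually.of_forall (fun ω => ?_)
  rw [Real.norm_eq_abs, abs_le]
  constructor
  · calc -(∑ i, |f i ω|) ≤ -|f 0 ω| := by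
          simp only [neg_le_neg_iff]
          exact Finset.single_le_sum (f := fun i => |f i ω|) (fun i _ => abs_nonneg _) (mem_univ 0)
      _ ≤ f 0 ω := neg_abs_le _
      _ ≤ _ := Finset.le_sup' (fun i => f i ω) (mem_univ 0)
  · exact Finset.sup'_le _ _ fun i _ => (le_abs_self _).trans
      (Finset.single_le_sum (f := fun i => |f i ω|) (fun i _ => abs_nonneg _) (mem_univ i))

/-- Core–tail decomposition for unweighted linear correlations: with `A = {j : Y_j > τ}`,
`E[max_i X_i] ≤ E[max_i Σ_{j ∈ S_i, Y_j ≤ τ} Y_j] + Σ_j Pr[Y_j > τ]·E[Y_j | Y_j > τ]`, and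
`E[max_i Σ_{j ∈ S_i, Y_j ≤ τ} Y_j] ≤ E[max_i X_i | A = ∅]` (stated multiplied through by
`Pr[A = ∅] > 0`). -/
theorem stmt17 {Ω : Type*} [MeasurableSpace Ω] (μ : Measure Ω) [IsProbabilityMeasure μ]
    {n m : ℕ} (Y : Fin (m + 1) → Ω → ℝ)
    (hYmeas : ∀ j, Measurable (Y j)) (hYnn : ∀ j ω, 0 ≤ Y j ω)
    (hYint : ∀ j, Integrable (Y j) μ)
    (hindep : iIndepFun Y μ)
    (S : Fin (n + 1) → Finset (Fin (m + 1)))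
    (X : Fin (n + 1) → Ω → ℝ) (hX : ∀ i ω, X i ω = ∑ j ∈ S i, Y j ω)
    (τ : ℝ) (hτ : 0 < τ)
    (hpos : 0 < (μ {ω | ∀ j, Y j ω ≤ τ}).toReal) :
    (∫ ω, Finset.univ.sup' Finset.univ_nonempty (fun i => X i ω) ∂μ
        ≤ (∫ ω, Finset.univ.sup' Finset.univ_nonempty
              (fun i => ∑ j ∈ (S i).filter (fun j => Y j ω ≤ τ), Y j ω) ∂μ)
          + ∑ j, ∫ ω in {ω | τ < Y j ω}, Y j ω ∂μ) ∧
    ((∫ ω, Finset.univ.sup' Finset.univ_nonempty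
          (fun i => ∑ j ∈ (S i).filter (fun j => Y j ω ≤ τ), Y j ω) ∂μ)
        * (μ {ω | ∀ j, Y j ω ≤ τ}).toReal
      ≤ ∫ ω in {ω | ∀ j, Y j ω ≤ τ},
          Finset.univ.sup' Finset.univ_nonempty (fun i => X i ω) ∂μ) := by
  classical
  -- truncated variables
  set t : Fin (m + 1) → Ω → ℝ := fun j ω => if Y j ω ≤ τ then Y j ω else 0 with ht_def
  have htmeas : ∀ j, Measurable (t j) := fun j =>
    Measurable.ite (measurableSet_le (hYmeas j) measurable_const) (hYmeas j) measurable_const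
  have htnn : ∀ j ω, 0 ≤ t j ω := fun j ω => by
    simp only [ht_def]; split <;> simp [hYnn j ω]
  have htle : ∀ j ω, t j ω ≤ Y j ω := fun j ω => by
    simp only [ht_def]; split <;> simp [hYnn j ω]
  have htint : ∀ j, Integrable (t j) μ := fun j =>
    (hYint j).mono' (htmeas j).aestronglyMeasurable
      (Filter.Eventually.of_forall fun ω => by
        rw [Real.norm_eq_abs, abs_of_nonneg (htnn j ω)]; exact htle j ω)
  set g : Ω → ℝ := fun ω =>
    Finset.univ.sup' Finset.univ_nonempty (fun i => ∑ j ∈ S i, t j ω) with hg_def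
  have hgmeas : Measurable g :=
    measurable_sup'_fun _ (fun i => Finset.measurable_sum _ (fun j _ => htmeas j))
  have hgint : Integrable g μ :=
    integrable_sup'_fun _ (fun i => Finset.measurable_sum _ (fun j _ => htmeas j))
      (fun i => integrable_finset_sum _ (fun j _ => htint j))
  have hgnn : ∀ ω, 0 ≤ g ω := fun ω =>
    le_trans (Finset.sum_nonneg fun j _ => htnn j ω)
      (Finset.le_sup' (fun i => ∑ j ∈ S i, t j ω) (mem_univ 0))
  -- the statement's truncated sup equals g
  have hgoal_eq : (fun ω => Finset.univ.sup' Finset.univ_nonempty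
      (fun i => ∑ j ∈ (S i).filter (fun j => Y j ω ≤ τ), Y j ω)) = g := by
    funext ω
    simp only [hg_def]
    congr 1
    funext i
    rw [Finset.sum_filter]
  -- sup of the X's
  set sX : Ω → ℝ := fun ω =>
    Finset.univ.sup' Finset.univ_nonempty (fun i => ∑ j ∈ S i, Y j ω) with hsX_def
  have hsXeq : (fun ω => Finset.univ.sup' Finset.univ_nonempty (fun i => X i ω)) = sX := by
    funext ω; simp only [hsX_def]; congr 1; funext i; exact hX i ω
  have hsXmeas : Measurable sX :=
    measurable_sup'_fun _ (fun i => Finset.measurable_sum _ (fun j _ => hYmeas j))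
  have hsXint : Integrable sX μ :=
    integrable_sup'_fun _ (fun i => Finset.measurable_sum _ (fun j _ => hYmeas j))
      (fun i => integrable_finset_sum _ (fun j _ => hYint j))
  constructor
  · set u : Fin (m + 1) → Ω → ℝ := fun j ω => if τ < Y j ω then Y j ω else 0 with hu_def
    have humeas : ∀ j, Measurable (u j) := fun j =>
      Measurable.ite (measurableSet_lt measurable_const (hYmeas j)) (hYmeas j) measurable_const
    have hunn : ∀ j ω, 0 ≤ u j ω := fun j ω => by
      simp only [hu_def]; split <;> simp [hYnn j ω]
    have huint : ∀ j, Integrable (u j) μ := fun j =>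
      (hYint j).mono' (humeas j).aestronglyMeasurable
        (Filter.Eventually.of_forall fun ω => by
          rw [Real.norm_eq_abs, abs_of_nonneg (hunn j ω)]
          simp only [hu_def]; split <;> simp [hYnn j ω])
    have hYsplit : ∀ j ω, Y j ω = t j ω + u j ω := fun j ω => by
      simp only [ht_def, hu_def]
      by_cases h : Y j ω ≤ τ
      · simp [h, not_lt_of_ge h]
      · simp [h, lt_of_not_ge h]
    have hpt : ∀ ω, sX ω ≤ g ω + ∑ j, u j ω := by
      intro ω
      refine Finset.sup'_le _ _ fun i _ => ?_
      calc ∑ j ∈ S i, Y j ω = ∑ j ∈ S i, t j ω + ∑ j ∈ S i, u j ω := by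
            rw [← Finset.sum_add_distrib]
            exact Finset.sum_congr rfl fun j _ => hYsplit j ω
        _ ≤ ∑ j ∈ S i, t j ω + ∑ j, u j ω :=
            add_le_add le_rfl (Finset.sum_le_sum_of_subset_of_nonneg (Finset.subset_univ _)
              (fun j _ _ => hunn j ω))
        _ ≤ g ω + ∑ j, u j ω :=
            add_le_add (Finset.le_sup' (fun i => ∑ j ∈ S i, t j ω) (mem_univ i)) le_rfl
    have husum : Integrable (fun ω => ∑ j, u j ω) μ :=
      integrable_finset_sum _ (fun j _ => huint j)
    have h1 : ∫ ω, sX ω ∂μ ≤ ∫ ω, (g ω + ∑ j, u j ω) ∂μ :=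
      integral_mono hsXint (hgint.add husum) hpt
    rw [integral_add hgint husum, integral_finset_sum _ (fun j _ => huint j)] at h1
    have hueq : ∀ j, ∫ ω, u j ω ∂μ = ∫ ω in {ω | τ < Y j ω}, Y j ω ∂μ := fun j => by
      rw [← integral_indicator (measurableSet_lt measurable_const (hYmeas j))]
      exact integral_congr_ae (Filter.Eventually.of_forall fun ω => by
        simp only [hu_def, Set.indicator_apply, Set.mem_setOf_eq])
    rw [hsXeq, hgoal_eq]
    calc ∫ ω, sX ω ∂μ ≤ ∫ ω, g ω ∂μ + ∑ j, ∫ ω, u j ω ∂μ := h1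
      _ = ∫ ω, g ω ∂μ + ∑ j, ∫ ω in {ω | τ < Y j ω}, Y j ω ∂μ := by
          congr 1; exact Finset.sum_congr rfl fun j _ => hueq j
  · -- Part 2
    set χ : Fin (m + 1) → Ω → ℝ := fun j ω => if Y j ω ≤ τ then 1 else 0 with hχ_def
    have hχmeas : ∀ j, Measurable (χ j) := fun j =>
      Measurable.ite (measurableSet_le (hYmeas j) measurable_const) measurable_const
        measurable_const
    have hχnn : ∀ j ω, 0 ≤ χ j ω := fun j ω => by simp only [hχ_def]; split <;> norm_num
    have hχle : ∀ j ω, χ j ω ≤ 1 := fun j ω => by simp only [hχ_def]; split <;> norm_num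
    set p : Fin (m + 1) → ℝ := fun j => (μ {ω | Y j ω ≤ τ}).toReal with hp_def
    have hpnn : ∀ j, 0 ≤ p j := fun j => ENNReal.toReal_nonneg
    have hχint : ∀ j, Integrable (χ j) μ := fun j =>
      (integrable_const (1:ℝ)).mono' (hχmeas j).aestronglyMeasurable
        (Filter.Eventually.of_forall fun ω => by
          rw [Real.norm_eq_abs, abs_of_nonneg (hχnn j ω)]; exact hχle j ω)
    have hχint' : ∀ j, ∫ ω, χ j ω ∂μ = p j := fun j => by
      have hset : MeasurableSet {ω | Y j ω ≤ τ} := measurableSet_le (hYmeas j) measurable_const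
      have heq : χ j = Set.indicator {ω | Y j ω ≤ τ} (fun _ => (1:ℝ)) := funext fun ω => by
        simp only [hχ_def, Set.indicator_apply, Set.mem_setOf_eq]
      rw [heq, integral_indicator_const _ hset]
      simp [hp_def, measureReal_def]
    have key : ∀ T : Finset (Fin (m + 1)),
        (∫ ω, g ω ∂μ) * ∏ j ∈ T, p j ≤ ∫ ω, g ω * ∏ j ∈ T, χ j ω ∂μ := by
      intro T
      induction T using Finset.induction_on with
      | empty => simp
      | @insert k T hk IH =>
        set g0 : Ω → ℝ := fun ω =>
          Finset.univ.sup' Finset.univ_nonempty (fun i => ∑ j ∈ (S i).erase k, t j ω)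
          with hg0_def
        have hg0meas : Measurable g0 :=
          measurable_sup'_fun _ (fun i => Finset.measurable_sum _ (fun j _ => htmeas j))
        have hg0int : Integrable g0 μ :=
          integrable_sup'_fun _ (fun i => Finset.measurable_sum _ (fun j _ => htmeas j))
            (fun i => integrable_finset_sum _ (fun j _ => htint j))
        have hg0nn : ∀ ω, 0 ≤ g0 ω := fun ω =>
          le_trans (Finset.sum_nonneg fun j _ => htnn j ω)
            (Finset.le_sup' (fun i => ∑ j ∈ (S i).erase k, t j ω) (mem_univ 0))
        have hg0le : ∀ ω, g0 ω ≤ g ω := fun ω =>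
          Finset.sup'_le _ _ fun i _ =>
            le_trans (Finset.sum_le_sum_of_subset_of_nonneg (Finset.erase_subset _ _)
              (fun j _ _ => htnn j ω))
              (Finset.le_sup' (fun i => ∑ j ∈ S i, t j ω) (mem_univ i))
        set P : Ω → ℝ := fun ω => ∏ j ∈ T, χ j ω with hP_def
        have hPmeas : Measurable P := Finset.measurable_prod _ (fun j _ => hχmeas j)
        have hPnn : ∀ ω, 0 ≤ P ω := fun ω => Finset.prod_nonneg fun j _ => hχnn j ω
        have hPle : ∀ ω, P ω ≤ 1 := fun ω =>
          Finset.prod_le_one (fun j _ => hχnn j ω) (fun j _ => hχle j ω)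
        have hTint : Integrable (fun ω => g ω * P ω) μ :=
          hgint.mono' (hgmeas.mul hPmeas).aestronglyMeasurable
            (Filter.Eventually.of_forall fun ω => by
              rw [Real.norm_eq_abs, abs_of_nonneg (mul_nonneg (hgnn ω) (hPnn ω))]
              calc g ω * P ω ≤ g ω * 1 :=
                    mul_le_mul_of_nonneg_left (hPle ω) (hgnn ω)
                _ = g ω := mul_one _)
        have h0int : Integrable (fun ω => g0 ω * P ω) μ :=
          hg0int.mono' (hg0meas.mul hPmeas).aestronglyMeasurable
            (Filter.Eventually.of_forall fun ω => by
              rw [Real.norm_eq_abs, abs_of_nonneg (mul_nonneg (hg0nn ω) (hPnn ω))]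
              calc g0 ω * P ω ≤ g0 ω * 1 :=
                    mul_le_mul_of_nonneg_left (hPle ω) (hg0nn ω)
                _ = g0 ω := mul_one _)
        set ψ : Ω → ℝ := fun ω => if Y k ω ≤ τ then (0:ℝ) else 1 with hψ_def
        have hψmeas : Measurable ψ :=
          Measurable.ite (measurableSet_le (hYmeas k) measurable_const) measurable_const
            measurable_const
        have hψnn : ∀ ω, 0 ≤ ψ ω := fun ω => by simp only [hψ_def]; split <;> norm_num
        have hψle : ∀ ω, ψ ω ≤ 1 := fun ω => by simp only [hψ_def]; split <;> norm_num
        have hψint : Integrable ψ μ :=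
          (integrable_const (1:ℝ)).mono' hψmeas.aestronglyMeasurable
            (Filter.Eventually.of_forall fun ω => by
              rw [Real.norm_eq_abs, abs_of_nonneg (hψnn ω)]; exact hψle ω)
        have hq : ∫ ω, ψ ω ∂μ = 1 - p k := by
          have hsum : ∀ ω, χ k ω + ψ ω = 1 := fun ω => by
            simp only [hχ_def, hψ_def]; split <;> norm_num
          have h1 : ∫ ω, (χ k ω + ψ ω) ∂μ = 1 := by
            simp only [hsum]; simp
          rw [integral_add (hχint k) hψint, hχint' k] at h1
          linarith
        -- independence
        have hdisj : Disjoint (univ.erase k) ({k} : Finset (Fin (m + 1))) :=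
          Finset.disjoint_singleton_right.mpr (Finset.notMem_erase k univ)
        set F : (↥(univ.erase (k : Fin (m + 1))) → ℝ) → ℝ := fun v =>
          (Finset.univ.sup' Finset.univ_nonempty (fun i =>
              ∑ j ∈ (univ.erase k).attach.filter (fun j => j.1 ∈ S i),
                (if v j ≤ τ then v j else 0))) *
            ∏ j ∈ (univ.erase k).attach.filter (fun j => j.1 ∈ T),
              (if v j ≤ τ then (1:ℝ) else 0) with hF_def
        have hFmeas : Measurable F := by
          refine Measurable.mul ?_ ?_
          · exact measurable_sup'_fun _ (fun i => Finset.measurable_sum _ (fun j _ =>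
              Measurable.ite (measurableSet_le (measurable_pi_apply j) measurable_const)
                (measurable_pi_apply j) measurable_const))
          · exact Finset.measurable_prod _ (fun j _ =>
              Measurable.ite (measurableSet_le (measurable_pi_apply j) measurable_const)
                measurable_const measurable_const)
        set G : (↥({k} : Finset (Fin (m + 1))) → ℝ) → ℝ := fun v =>
          if v ⟨k, Finset.mem_singleton_self k⟩ ≤ τ then (0:ℝ) else 1 with hG_def
        have hGmeas : Measurable G :=
          Measurable.ite (measurableSet_le (measurable_pi_apply _) measurable_const)
            measurable_const measurable_const
        have hIF := (hindep.indepFun_finset (univ.erase k) {k} hdisj hYmeas).comp hFmeas hGmeas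
        have hFcomp : (F ∘ fun ω (j : ↥(univ.erase (k : Fin (m + 1)))) => Y j ω)
            = fun ω => g0 ω * P ω := by
          funext ω
          simp only [Function.comp_apply, hF_def, hg0_def, hP_def, ht_def, hχ_def]
          congr 1
          · congr 1
            funext i
            rw [Finset.sum_filter]
            rw [Finset.sum_attach (univ.erase k)
                (fun j => if j ∈ S i then (if Y j ω ≤ τ then Y j ω else 0) else 0)]
            rw [← Finset.sum_filter]
            congr 1
            ext j
            simp only [Finset.mem_filter, Finset.mem_erase, Finset.mem_univ, and_true,
              true_and]
          · rw [Finset.prod_filter,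
              Finset.prod_attach (univ.erase k)
                (fun j => if j ∈ T then (if Y j ω ≤ τ then (1:ℝ) else 0) else 1),
              ← Finset.prod_filter]
            congr 1
            ext j
            simp only [Finset.mem_filter, Finset.mem_erase, Finset.mem_univ, and_true,
              true_and]
            exact ⟨fun h => h.2, fun h => ⟨fun hjk => hk (hjk ▸ h), h⟩⟩
        have hGcomp : (G ∘ fun ω (j : ↥({k} : Finset (Fin (m + 1)))) => Y j ω)
            = ψ := by
          funext ω
          simp only [Function.comp_apply, hG_def, hψ_def]
        have hIndep0 : IndepFun (fun ω => g0 ω * P ω) ψ μ := by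
          rw [← hFcomp, ← hGcomp]; exact hIF
        have hmulint : ∫ ω, (g0 ω * P ω) * ψ ω ∂μ
            = (∫ ω, g0 ω * P ω ∂μ) * (∫ ω, ψ ω ∂μ) :=
          IndepFun.integral_mul_eq_mul_integral hIndep0 h0int.aestronglyMeasurable hψint.aestronglyMeasurable
        have hsplit : ∀ ω, g ω * P ω = (g ω * P ω) * χ k ω + (g0 ω * P ω) * ψ ω := fun ω => by
          by_cases h : Y k ω ≤ τ
          · simp [hχ_def, hψ_def, h]
          · have htk : t k ω = 0 := by simp [ht_def, h]
            have hgg0 : g ω = g0 ω := by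
              simp only [hg_def, hg0_def]
              congr 1
              funext i
              exact (Finset.sum_erase (f := fun j => t j ω) (S i) htk).symm
            simp [hχ_def, hψ_def, h, hgg0]
        have hint2 : Integrable (fun ω => (g ω * P ω) * χ k ω) μ :=
          hgint.mono' ((hgmeas.mul hPmeas).mul (hχmeas k)).aestronglyMeasurable
            (Filter.Eventually.of_forall fun ω => by
              rw [Real.norm_eq_abs,
                abs_of_nonneg (mul_nonneg (mul_nonneg (hgnn ω) (hPnn ω)) (hχnn k ω))]
              calc g ω * P ω * χ k ω ≤ g ω * 1 * 1 := by
                    apply mul_le_mul (mul_le_mul_of_nonneg_left (hPle ω) (hgnn ω))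
                      (hχle k ω) (hχnn k ω)
                    exact mul_nonneg (hgnn ω) zero_le_one
                _ = g ω := by ring)
        have hint3 : Integrable (fun ω => (g0 ω * P ω) * ψ ω) μ :=
          hg0int.mono' ((hg0meas.mul hPmeas).mul hψmeas).aestronglyMeasurable
            (Filter.Eventually.of_forall fun ω => by
              rw [Real.norm_eq_abs,
                abs_of_nonneg (mul_nonneg (mul_nonneg (hg0nn ω) (hPnn ω)) (hψnn ω))]
              calc g0 ω * P ω * ψ ω ≤ g0 ω * 1 * 1 := by
                    apply mul_le_mul (mul_le_mul_of_nonneg_left (hPle ω) (hg0nn ω))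
                      (hψle ω) (hψnn ω)
                    exact mul_nonneg (hg0nn ω) zero_le_one
                _ = g0 ω := by ring)
        have heq1 : ∫ ω, g ω * P ω ∂μ
            = ∫ ω, (g ω * P ω) * χ k ω ∂μ + ∫ ω, (g0 ω * P ω) * ψ ω ∂μ := by
          rw [← integral_add hint2 hint3]
          exact integral_congr_ae (Filter.Eventually.of_forall hsplit)
        have hle0 : ∫ ω, g0 ω * P ω ∂μ ≤ ∫ ω, g ω * P ω ∂μ :=
          integral_mono h0int hTint
            (fun ω => mul_le_mul_of_nonneg_right (hg0le ω) (hPnn ω))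
        have hqnn : 0 ≤ ∫ ω, ψ ω ∂μ := integral_nonneg hψnn
        have hstep : (∫ ω, g ω * P ω ∂μ) * p k ≤ ∫ ω, (g ω * P ω) * χ k ω ∂μ := by
          have e1 : (∫ ω, g ω * P ω ∂μ) * p k
              = (∫ ω, g ω * P ω ∂μ) - (∫ ω, g ω * P ω ∂μ) * (∫ ω, ψ ω ∂μ) := by
            rw [hq]; ring
          have e2 : (∫ ω, g0 ω * P ω ∂μ) * (∫ ω, ψ ω ∂μ)
              ≤ (∫ ω, g ω * P ω ∂μ) * (∫ ω, ψ ω ∂μ) :=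
            mul_le_mul_of_nonneg_right hle0 hqnn
          rw [hmulint] at heq1
          linarith
        calc (∫ ω, g ω ∂μ) * ∏ j ∈ insert k T, p j
            = ((∫ ω, g ω ∂μ) * ∏ j ∈ T, p j) * p k := by
              rw [Finset.prod_insert hk]; ring
          _ ≤ (∫ ω, g ω * P ω ∂μ) * p k := mul_le_mul_of_nonneg_right IH (hpnn k)
          _ ≤ ∫ ω, (g ω * P ω) * χ k ω ∂μ := hstep
          _ = ∫ ω, g ω * ∏ j ∈ insert k T, χ j ω ∂μ := by
              refine integral_congr_ae (Filter.Eventually.of_forall fun ω => ?_)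
              show g ω * P ω * χ k ω = g ω * ∏ j ∈ insert k T, χ j ω
              rw [Finset.prod_insert hk, hP_def]; ring
    -- final assembly
    have hE : {ω | ∀ j, Y j ω ≤ τ} = ⋂ j, Y j ⁻¹' Set.Iic τ := by
      ext ω; simp [Set.mem_iInter, Set.mem_preimage]
    have hEmeas : MeasurableSet {ω | ∀ j, Y j ω ≤ τ} := by
      rw [hE]; exact MeasurableSet.iInter fun j => (hYmeas j) measurableSet_Iic
    have hmeasprod : (μ {ω | ∀ j, Y j ω ≤ τ}).toReal = ∏ j, p j := by
      rw [hE, hindep.meas_iInter (fun j => ⟨Set.Iic τ, measurableSet_Iic, rfl⟩),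
        ENNReal.toReal_prod]
      exact Finset.prod_congr rfl fun j _ => rfl
    have hfin : ∫ ω, g ω * ∏ j, χ j ω ∂μ
        = ∫ ω in {ω | ∀ j, Y j ω ≤ τ}, sX ω ∂μ := by
      rw [← integral_indicator hEmeas]
      refine integral_congr_ae (Filter.Eventually.of_forall fun ω => ?_)
      simp only [Set.indicator_apply, Set.mem_setOf_eq]
      by_cases h : ∀ j, Y j ω ≤ τ
      · have h1 : ∏ j, χ j ω = 1 := Finset.prod_eq_one fun j _ => by simp [hχ_def, h j]
        have h2 : g ω = sX ω := by
          simp only [hg_def, hsX_def]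
          congr 1
          funext i
          exact Finset.sum_congr rfl fun j _ => by simp [ht_def, h j]
        simp [h, h1, h2]
      · have h1 : ∏ j, χ j ω = 0 := by
          push_neg at h
          obtain ⟨j0, hj0⟩ := h
          exact Finset.prod_eq_zero (mem_univ j0) (by simp [hχ_def, hj0])
        simp [h, h1]
    rw [hgoal_eq, hsXeq, hmeasprod, ← hfin]
    exact key univ
end
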